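/- arXiv:1812.06442 — 6 statements merged into one kernel-verified Lean document; each statement's English description precedes it below -/
import Mathlib

section
/- Let f be holomorphic on the disk D(0,r) ⊂ ℂ and g holomorphic on D(0,s), with Taylor coefficients aₙ and bₙ at 0. For any ρ with 0 < ρ < r and any z with |z| < ρ·s, one has Σₙ aₙ bₙ zⁿ = (1/(2πi)) ∮_{|ζ|=ρ} f(ζ) g(z/ζ) dζ/ζ, where the integral is over the positively oriented circle of radius ρ. -/
/-!
On the circle `|ζ| = ρ` we have `|z / ζ| = |z| / ρ < s`, so `g (z / ζ) = ∑ bₙ zⁿ ζ⁻ⁿ` and the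
integrand expands as `∑ bₙ zⁿ f ζ / ζⁿ⁺¹`. Cauchy's estimates for `g` on a circle of radius
between `|z| / ρ` and `s` make `∑ ‖bₙ‖ (|z| / ρ)ⁿ` converge, which dominates this series uniformly
on the circle, so it may be integrated termwise; Cauchy's formula for derivatives,
`∮ f ζ / ζⁿ⁺¹ dζ = 2πi aₙ`, then evaluates each term.
-/

open Complex Metric

theorem hasSum_iteratedDeriv_div_factorial_mul_pow {f : ℂ → ℂ} {c w : ℂ} {R : ℝ}
    (hf : DifferentiableOn ℂ f (ball c R)) (hw : w ∈ ball c R) :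
    HasSum (fun n ↦ iteratedDeriv n f c / n.factorial * (w - c) ^ n) (f w) := by
  have h := Complex.hasSum_taylorSeries_on_ball hf hw
  simp_rw [smul_eq_mul] at h
  simpa only [div_eq_inv_mul, mul_left_comm, mul_comm, mul_assoc] using h

/-- Cauchy's estimates on a circle of radius `t ∈ (x, R)` dominate the terms by `C (x / t) ^ n`. -/
theorem summable_norm_iteratedDeriv_div_factorial_mul_pow {f : ℂ → ℂ} {c : ℂ} {R x : ℝ}
    (hf : DifferentiableOn ℂ f (ball c R)) (hx₀ : 0 ≤ x) (hxR : x < R) :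
    Summable fun n ↦ ‖iteratedDeriv n f c / n.factorial‖ * x ^ n := by
  obtain ⟨t, hxt, htR⟩ := exists_between hxR
  have ht : 0 < t := hx₀.trans_lt hxt
  have hft : DifferentiableOn ℂ f (closedBall c t) := hf.mono (closedBall_subset_ball htR)
  obtain ⟨C, hC⟩ := (isCompact_sphere c t).exists_bound_of_continuousOn
    (hft.continuousOn.mono sphere_subset_closedBall)
  have hcoeff (n : ℕ) : ‖iteratedDeriv n f c / n.factorial‖ ≤ C / t ^ n := by
    have := norm_iteratedDeriv_le_of_forall_mem_sphere_norm_le n ht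
      (hft.mono closure_ball_subset_closedBall).diffContOnCl hC
    rw [norm_div, norm_natCast, div_le_iff₀ (by positivity)]
    exact this.trans_eq (by ring)
  refine Summable.of_nonneg_of_le (fun n ↦ by positivity) (fun n ↦ ?_)
    ((summable_geometric_of_lt_one (by positivity) ((div_lt_one ht).2 hxt)).mul_left C)
  calc ‖iteratedDeriv n f c / n.factorial‖ * x ^ n ≤ C / t ^ n * x ^ n := by
        gcongr; exact hcoeff n
    _ = C * (x / t) ^ n := by rw [div_pow]; ring

theorem DifferentiableOn.circleIntegral_div_sub_pow_succ {f : ℂ → ℂ} {c : ℂ} {R : ℝ}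
    (hf : DifferentiableOn ℂ f (closedBall c R)) (hR : 0 < R) (n : ℕ) :
    ∮ ζ in C(c, R), f ζ / (ζ - c) ^ (n + 1) =
      2 * Real.pi * I * (iteratedDeriv n f c / n.factorial) := by
  have h := hf.circleIntegral_one_div_sub_center_pow_smul hR n
  simp only [smul_eq_mul, one_div_mul_eq_div] at h
  rw [h]
  ring

theorem circleIntegral.hasSum_integral_of_norm_le {ι E : Type*} [Countable ι]
    [NormedAddCommGroup E] [NormedSpace ℂ E] {F : ι → ℂ → E} {G : ℂ → E} {c : ℂ} {R : ℝ}
    {u : ι → ℝ} (hF : ∀ i, CircleIntegrable (F i) c R) (hu : Summable u)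
    (hFu : ∀ i, ∀ ζ ∈ sphere c |R|, ‖F i ζ‖ ≤ u i)
    (hFG : ∀ ζ ∈ sphere c |R|, HasSum (fun i ↦ F i ζ) (G ζ)) :
    HasSum (fun i ↦ ∮ ζ in C(c, R), F i ζ) (∮ ζ in C(c, R), G ζ) := by
  refine intervalIntegral.hasSum_integral_of_dominated_convergence (fun i _ ↦ |R| * u i)
    (fun i ↦ ((circleIntegrable_iff R).1 (hF i)).def'.aestronglyMeasurable)
    (fun i ↦ .of_forall fun θ _ ↦ ?_) (.of_forall fun _ _ ↦ hu.mul_left _)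
    (by simp [tsum_mul_left])
    (.of_forall fun θ _ ↦ (hFG _ (circleMap_mem_sphere' c R θ)).const_smul _)
  rw [norm_smul, deriv_circleMap, norm_mul, norm_circleMap_zero, norm_I, mul_one]
  exact mul_le_mul_of_nonneg_left (hFu i _ (circleMap_mem_sphere' c R θ)) (abs_nonneg R)

theorem hasSum_iteratedDeriv_mul_div_pow_succ {g : ℂ → ℂ} {s : ℝ} {z ζ : ℂ} (w : ℂ)
    (hg : DifferentiableOn ℂ g (ball 0 s)) (hζ : ζ ≠ 0) (hzζ : z / ζ ∈ ball 0 s) :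
    HasSum (fun n ↦ iteratedDeriv n g 0 / n.factorial * z ^ n * (w / ζ ^ (n + 1)))
      (w * g (z / ζ) / ζ) := by
  rw [show w * g (z / ζ) / ζ = g (z / ζ) * (w / ζ) by ring]
  refine ((hasSum_iteratedDeriv_div_factorial_mul_pow hg hzζ).mul_right (w / ζ)).congr_fun
    fun n ↦ ?_
  rw [sub_zero, div_pow]
  field_simp
  ring

theorem hasSum_two_pi_I_hadamard_circleIntegral {f g : ℂ → ℂ} {r s ρ : ℝ} {z : ℂ}
    (hf : DifferentiableOn ℂ f (ball 0 r)) (hg : DifferentiableOn ℂ g (ball 0 s))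
    (hρ : 0 < ρ) (hρr : ρ < r) (hz : ‖z‖ < ρ * s) :
    HasSum (fun n ↦ 2 * Real.pi * I *
        (iteratedDeriv n f 0 / n.factorial * (iteratedDeriv n g 0 / n.factorial) * z ^ n))
      (∮ ζ in C(0, ρ), f ζ * g (z / ζ) / ζ) := by
  have hzρ : ‖z‖ / ρ < s := (div_lt_iff₀' hρ).2 hz
  have hfρ : DifferentiableOn ℂ f (closedBall 0 ρ) := hf.mono (closedBall_subset_ball hρr)
  have hf_sphere : ContinuousOn f (sphere 0 ρ) := hfρ.continuousOn.mono sphere_subset_closedBall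
  obtain ⟨M, hM⟩ := (isCompact_sphere 0 ρ).exists_bound_of_continuousOn hf_sphere
  have hterm (n : ℕ) : 2 * Real.pi * I *
      (iteratedDeriv n f 0 / n.factorial * (iteratedDeriv n g 0 / n.factorial) * z ^ n) =
      ∮ ζ in C(0, ρ), iteratedDeriv n g 0 / n.factorial * z ^ n * (f ζ / ζ ^ (n + 1)) := by
    have hcauchy := hfρ.circleIntegral_div_sub_pow_succ hρ n
    simp only [sub_zero] at hcauchy
    rw [circleIntegral.integral_const_mul, hcauchy]
    ring
  simp_rw [hterm]
  refine circleIntegral.hasSum_integral_of_norm_le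
    (u := fun n ↦ ‖iteratedDeriv n g 0 / n.factorial‖ * (‖z‖ / ρ) ^ n * (M / ρ))
    (fun n ↦ ?_) ?_ (fun n ζ hζ ↦ ?_) (fun ζ hζ ↦ ?_)
  · exact ContinuousOn.circleIntegrable hρ.le (continuousOn_const.mul (hf_sphere.div
      (continuousOn_id.pow _) fun ζ hζ ↦ pow_ne_zero _ (ne_zero_of_mem_sphere hρ.ne' ⟨ζ, hζ⟩)))
  · exact (summable_norm_iteratedDeriv_div_factorial_mul_pow hg (by positivity) hzρ).mul_right _
  · have hζρ : ‖ζ‖ = ρ := by simpa [abs_of_pos hρ] using hζ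
    calc _ = ‖iteratedDeriv n g 0 / n.factorial‖ * (‖z‖ / ρ) ^ n * (‖f ζ‖ / ρ) := by
          simp only [norm_mul, norm_div, norm_pow, hζρ, div_pow, pow_succ]
          field_simp
      _ ≤ _ := by gcongr; exact hM ζ (mem_sphere_zero_iff_norm.2 hζρ)
  · have hζρ : ‖ζ‖ = ρ := by simpa [abs_of_pos hρ] using hζ
    refine hasSum_iteratedDeriv_mul_div_pow_succ (f ζ) hg (norm_pos_iff.1 (hζρ ▸ hρ)) ?_
    rwa [mem_ball_zero_iff, norm_div, hζρ]

theorem stmt_1_general (r s : ℝ) (f g : ℂ → ℂ)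
    (hf : DifferentiableOn ℂ f (ball (0 : ℂ) r))
    (hg : DifferentiableOn ℂ g (ball (0 : ℂ) s))
    (a b : ℕ → ℂ)
    (ha : ∀ n, a n = iteratedDeriv n f 0 / n.factorial)
    (hb : ∀ n, b n = iteratedDeriv n g 0 / n.factorial)
    (ρ : ℝ) (hρ : 0 < ρ) (hρr : ρ < r)
    (z : ℂ) (hz : ‖z‖ < ρ * s) :
    ∑' n : ℕ, a n * b n * z ^ n =
      (1 / (2 * Real.pi * Complex.I)) *
        ∮ ζ in C(0, ρ), f ζ * g (z / ζ) / ζ := by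
  have h := hasSum_two_pi_I_hadamard_circleIntegral hf hg hρ hρr hz
  simp_rw [← ha, ← hb] at h
  rw [one_div, eq_inv_mul_iff_mul_eq₀ two_pi_I_ne_zero, ← h.tsum_eq, tsum_mul_left]

/-- Cauchy integral representation of the Hadamard product: if `f` is holomorphic on `D(0,r)`
and `g` is holomorphic on `D(0,s)`, with Taylor coefficients `a n = f⁽ⁿ⁾(0)/n!` and
`b n = g⁽ⁿ⁾(0)/n!`, then for `0 < ρ < r` and `|z| < ρ * s`,
`∑ aₙ bₙ zⁿ = (1/(2πi)) ∮_{|ζ|=ρ} f ζ * g (z/ζ) dζ/ζ`. -/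
theorem stmt_1 (r s : ℝ) (hr : 0 < r) (hs : 0 < s) (f g : ℂ → ℂ)
    (hf : DifferentiableOn ℂ f (ball (0 : ℂ) r))
    (hg : DifferentiableOn ℂ g (ball (0 : ℂ) s))
    (a b : ℕ → ℂ)
    (ha : ∀ n, a n = iteratedDeriv n f 0 / n.factorial)
    (hb : ∀ n, b n = iteratedDeriv n g 0 / n.factorial)
    (ρ : ℝ) (hρ : 0 < ρ) (hρr : ρ < r)
    (z : ℂ) (hz : ‖z‖ < ρ * s) :
    ∑' n : ℕ, a n * b n * z ^ n =
      (1 / (2 * Real.pi * Complex.I)) *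
        ∮ ζ in C(0, ρ), f ζ * g (z / ζ) / ζ :=
  stmt_1_general r s f g hf hg a b ha hb ρ hρ hρr z hz
end

section
/- Let S₁, S₂ be proper convolvable closed subsets of ℂ* with S₁·S₂ ≠ ℂ*, let U be a relatively compact open subset of ℂ*, and let V be an open neighbourhood of S₁·S₂ in ℂ*. Then there exists a compact neighbourhood W of 1 in ℂ* such that (W²·S₁·S₂) ∩ closure(U) ⊆ V. -/
/-!
The product `P = S₁·S₂` is closed: for a compact neighbourhood `K` of a point,
`P ∩ K ⊆ (S₁ ∩ K·S₂⁻¹)·S₂ ⊆ P`, and the middle set is compact times closed, hence closed.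
Then `D = (closure U \ V)·P⁻¹` is again compact times closed, and `1 ∉ D` because `P ⊆ V`.
Any compact `W` with `W·W ⊆ Dᶜ` works, since `w·p ∈ closure U \ V` would put `w` in `D`.
-/

open scoped Pointwise
open Topology

theorem Set.mul_inter_subset_inter_mul_inv_mul {G : Type*} [Group G] (S₁ S₂ K : Set G) :
    S₁ * S₂ ∩ K ⊆ (S₁ ∩ (K * S₂⁻¹)) * S₂ := by
  rintro _ ⟨⟨s₁, hs₁, s₂, hs₂, rfl⟩, hK⟩
  refine ⟨s₁, ⟨hs₁, ?_⟩, s₂, hs₂, rfl⟩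
  simpa using Set.mul_mem_mul hK (Set.inv_mem_inv.mpr hs₂)

variable {G : Type*} [Group G] [TopologicalSpace G] [IsTopologicalGroup G]

def Convolvable (S₁ S₂ : Set G) : Prop :=
  ∀ K : Set G, IsCompact K → IsCompact (S₁ ∩ (K * S₂⁻¹))

theorem Convolvable.isClosed_mul [WeaklyLocallyCompactSpace G] {S₁ S₂ : Set G}
    (hconv : Convolvable S₁ S₂) (hS₂ : IsClosed S₂) : IsClosed (S₁ * S₂) := by
  refine closure_subset_iff_isClosed.mp fun x hx => ?_
  obtain ⟨K, hKc, hKx⟩ := exists_compact_mem_nhds x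
  have hclosed : IsClosed ((S₁ ∩ (K * S₂⁻¹)) * S₂) :=
    hS₂.mul_left_of_isCompact (hconv K hKc)
  have hx_near : x ∈ closure (S₁ * S₂ ∩ K) := by
    have hx_int : x ∈ interior K ∩ closure (S₁ * S₂) :=
      ⟨mem_interior_iff_mem_nhds.mpr hKx, hx⟩
    refine closure_mono (fun y hy => ?_) (isOpen_interior.inter_closure hx_int)
    exact ⟨hy.2, interior_subset hy.1⟩
  have hx_mem : x ∈ (S₁ ∩ (K * S₂⁻¹)) * S₂ :=
    closure_minimal (Set.mul_inter_subset_inter_mul_inv_mul S₁ S₂ K) hclosed hx_near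
  exact Set.mul_subset_mul_right Set.inter_subset_left hx_mem

theorem exists_mem_nhds_one_mul_inter_subset {P K V : Set G} (hP : IsClosed P)
    (hK : IsCompact K) (hV : IsOpen V) (hPV : P ⊆ V) :
    ∃ O ∈ 𝓝 (1 : G), O * P ∩ K ⊆ V := by
  have hD : IsClosed ((K ∩ Vᶜ) * P⁻¹) :=
    hP.inv.mul_left_of_isCompact (hK.inter_right hV.isClosed_compl)
  have h1D : (1 : G) ∉ (K ∩ Vᶜ) * P⁻¹ := by
    rintro ⟨k, ⟨-, hkV⟩, q, hq, hkq⟩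
    rw [eq_inv_of_mul_eq_one_left hkq] at hkV
    exact hkV (hPV (Set.mem_inv.mp hq))
  refine ⟨_, hD.isOpen_compl.mem_nhds h1D, ?_⟩
  rintro _ ⟨⟨o, ho, p, hp, rfl⟩, hoK⟩
  by_contra hnV
  exact ho ⟨o * p, ⟨hoK, hnV⟩, p⁻¹, Set.inv_mem_inv.mpr hp, mul_inv_cancel_right o p⟩

theorem exists_isCompact_mem_nhds_one_mul_self_subset [LocallyCompactSpace G] {O : Set G}
    (hO : O ∈ 𝓝 (1 : G)) : ∃ W : Set G, IsCompact W ∧ W ∈ 𝓝 (1 : G) ∧ W * W ⊆ O := by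
  obtain ⟨O', hO'open, hO'1, hO'O⟩ := exists_open_nhds_one_mul_subset hO
  obtain ⟨W, hW1, hWO', hWc⟩ := local_compact_nhds (hO'open.mem_nhds hO'1)
  exact ⟨W, hWc, hW1, (Set.mul_subset_mul hWO' hWO').trans hO'O⟩

theorem stmt_8_general (S₁ S₂ : Set ℂˣ) (hS₂ : IsClosed S₂)
    (hconv : ∀ K : Set ℂˣ, IsCompact K → IsCompact (S₁ ∩ (K * S₂⁻¹)))
    (U : Set ℂˣ) (hUc : IsCompact (closure U))
    (V : Set ℂˣ) (hV : IsOpen V) (hSV : S₁ * S₂ ⊆ V) :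
    ∃ W : Set ℂˣ, IsCompact W ∧ W ∈ nhds (1 : ℂˣ) ∧
      ((W * W) * (S₁ * S₂)) ∩ closure U ⊆ V := by
  have hP : IsClosed (S₁ * S₂) := Convolvable.isClosed_mul hconv hS₂
  obtain ⟨O, hO1, hO⟩ := exists_mem_nhds_one_mul_inter_subset hP hUc hV hSV
  obtain ⟨W, hWc, hW1, hWW⟩ := exists_isCompact_mem_nhds_one_mul_self_subset hO1
  exact ⟨W, hWc, hW1,
    (Set.inter_subset_inter_left _ (Set.mul_subset_mul_right hWW)).trans hO⟩

/-- Let `S₁, S₂` be proper convolvable closed subsets of `ℂ* = ℂˣ` with `S₁·S₂ ≠ ℂ*`, let `U`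
be a relatively compact open subset and `V` an open neighbourhood of `S₁·S₂`. Then there is a
compact neighbourhood `W` of `1` such that `(W²·S₁·S₂) ∩ closure U ⊆ V`. -/
theorem stmt_8 (S₁ S₂ : Set ℂˣ) (hS₁ : IsClosed S₁) (hS₂ : IsClosed S₂)
    (hS₁p : S₁ ≠ Set.univ) (hS₂p : S₂ ≠ Set.univ)
    (hconv : ∀ K : Set ℂˣ, IsCompact K → IsCompact (S₁ ∩ (K * S₂⁻¹)))
    (hprod : S₁ * S₂ ≠ Set.univ)
    (U : Set ℂˣ) (hU : IsOpen U) (hUc : IsCompact (closure U))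
    (V : Set ℂˣ) (hV : IsOpen V) (hSV : S₁ * S₂ ⊆ V) :
    ∃ W : Set ℂˣ, IsCompact W ∧ W ∈ nhds (1 : ℂˣ) ∧
      ((W * W) * (S₁ * S₂)) ∩ closure U ⊆ V :=
  stmt_8_general S₁ S₂ hS₂ hconv U hUc V hV hSV
end

section
/- Let f₁ be continuous on ℂ* and compactly supported, let f₂ : ℂ* → ℂ be continuous, and define f(z) = ∫_{ℂ*} f₁(ζ) f₂(z/ζ) dA(ζ) (integral with respect to Lebesgue measure on ℂ). If f₂ is holomorphic on ℂ* \ S₂ for some closed S₂, then f is holomorphic on every open set U ⊆ ℂ* such that (supp f₁)·S₂ is disjoint from U. -/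
/-!
The integrand vanishes for `ζ` outside the compact set `K = supp f₁`, so the integral is one over
`K`. For `z` in a small closed disc around a point of `U` and `ζ ∈ K`, the quotient `z / ζ` lies
in the open set `ℂ* \ S₂` where `f₂` is holomorphic; hence `(z, ζ) ↦ f₁ ζ * f₂' (z / ζ) / ζ` is
continuous on a compact set and thus bounded. That bound dominates the `z`-derivative of the
integrand, so one may differentiate under the integral sign.
-/

open scoped Pointwise
open MeasureTheory Metric Set Filter Topology

theorem IsOpen.diff_of_isClosed_preimage_val {X : Type*} [TopologicalSpace X] {s S : Set X}
    (hs : IsOpen s) (hS : IsClosed (Subtype.val ⁻¹' S : Set s)) : IsOpen (s \ S) := by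
  simpa [Subtype.image_preimage_val] using hs.isOpenMap_subtype_val _ hS.isOpen_compl

theorem div_notMem_of_mul_inter_eq_empty {α : Type*} [CommGroupWithZero α] {K S U : Set α}
    (hdisj : (K * S) ∩ U = ∅) {z ζ : α} (hz : z ∈ U) (hζ : ζ ∈ K) (hζ0 : ζ ≠ 0) :
    z / ζ ∉ S := fun hS => by
  have hmem : ζ * (z / ζ) ∈ (K * S) ∩ U := ⟨mul_mem_mul hζ hS, by rwa [mul_div_cancel₀ z hζ0]⟩
  rwa [hdisj] at hmem

section ParametricIntegral

variable {𝕜 X E : Type*} [RCLike 𝕜] [NormedAddCommGroup E] [NormedSpace ℝ E] [NormedSpace 𝕜 E]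
  [TopologicalSpace X] [T2Space X] [MeasurableSpace X] [OpensMeasurableSpace X]
  {μ : Measure X} [IsFiniteMeasureOnCompacts μ]

theorem hasDerivAt_setIntegral_of_isCompact {K : Set X} {s : Set 𝕜} {F F' : 𝕜 → X → E} {x₀ : 𝕜}
    (hK : IsCompact K) (hs : s ∈ 𝓝 x₀) (hsc : IsCompact s)
    (hF : ContinuousOn (Function.uncurry F) (s ×ˢ K))
    (hF' : ContinuousOn (Function.uncurry F') (s ×ˢ K))
    (hdiff : ∀ x ∈ s, ∀ a ∈ K, HasDerivAt (F · a) (F' x a) x) :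
    HasDerivAt (fun x => ∫ a in K, F x a ∂μ) (∫ a in K, F' x₀ a ∂μ) x₀ := by
  have hsection : ∀ {G : 𝕜 → X → E}, ContinuousOn (Function.uncurry G) (s ×ˢ K) →
      ∀ x ∈ s, IntegrableOn (G x) K μ := fun hG x hx =>
    (hG.comp (continuous_const.prodMk continuous_id).continuousOn
      fun a ha => ⟨hx, ha⟩).integrableOn_compact hK
  obtain ⟨C, hC⟩ := (hsc.prod hK).exists_bound_of_continuousOn hF'
  have : IsFiniteMeasure (μ.restrict K) := isFiniteMeasure_restrict.mpr hK.measure_ne_top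
  refine (hasDerivAt_integral_of_dominated_loc_of_deriv_le (bound := fun _ => C) hs
    ?_ (hsection hF x₀ (mem_of_mem_nhds hs)) (hsection hF' x₀ (mem_of_mem_nhds hs)).1
    ?_ (integrable_const C) ?_).2
  · filter_upwards [hs] with x hx using (hsection hF x hx).1
  · filter_upwards [ae_restrict_mem hK.measurableSet] with a ha x hx using hC (x, a) ⟨hx, ha⟩
  · filter_upwards [ae_restrict_mem hK.measurableSet] with a ha x hx using hdiff x hx a ha

end ParametricIntegral

theorem differentiableOn_integral_mul_comp_div {μ : Measure ℂ} [IsFiniteMeasureOnCompacts μ]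
    {g h : ℂ → ℂ} {K V U : Set ℂ} (hK : IsCompact K) (hK0 : 0 ∉ K) (hg : ContinuousOn g K)
    (hgK : ∀ ζ ∉ K, g ζ = 0) (hV : IsOpen V) (hh : DifferentiableOn ℂ h V) (hU : IsOpen U)
    (hUV : ∀ z ∈ U, ∀ ζ ∈ K, z / ζ ∈ V) :
    DifferentiableOn ℂ (fun z => ∫ ζ, g ζ * h (z / ζ) ∂μ) U := by
  intro z₀ hz₀
  obtain ⟨r, hr, hrU⟩ := nhds_basis_closedBall.mem_iff.mp (hU.mem_nhds hz₀)
  have hζ0 : ∀ p ∈ closedBall z₀ r ×ˢ K, p.2 ≠ 0 := fun p hp h0 => hK0 (h0 ▸ hp.2)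
  have hquot : ContinuousOn (fun p : ℂ × ℂ => p.1 / p.2) (closedBall z₀ r ×ˢ K) :=
    continuousOn_fst.div continuousOn_snd hζ0
  have hmapsTo : MapsTo (fun p : ℂ × ℂ => p.1 / p.2) (closedBall z₀ r ×ˢ K) V :=
    fun p hp => hUV p.1 (hrU hp.1) p.2 hp.2
  have hgsnd : ContinuousOn (fun p : ℂ × ℂ => g p.2) (closedBall z₀ r ×ˢ K) :=
    hg.comp continuousOn_snd fun p hp => hp.2
  have hderiv := hasDerivAt_setIntegral_of_isCompact (μ := μ) (x₀ := z₀)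
    (F := fun z ζ => g ζ * h (z / ζ)) (F' := fun z ζ => g ζ * (deriv h (z / ζ) * ζ⁻¹))
    hK (closedBall_mem_nhds z₀ hr) (isCompact_closedBall z₀ r)
    (hgsnd.mul (hh.continuousOn.comp hquot hmapsTo))
    (hgsnd.mul (((hh.deriv hV).continuousOn.comp hquot hmapsTo).mul
      (continuousOn_snd.inv₀ hζ0)))
    fun z hz ζ hζ => by
      have hdiv : HasDerivAt (· / ζ) ζ⁻¹ z := by
        simpa using (hasDerivAt_id z).div_const ζ
      exact ((hh.differentiableAt (hV.mem_nhds (hUV z (hrU hz) ζ hζ))).hasDerivAt.comp z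
        hdiv).const_mul (g ζ)
  have hsupp : ∀ z, ∫ ζ in K, g ζ * h (z / ζ) ∂μ = ∫ ζ, g ζ * h (z / ζ) ∂μ := fun z =>
    setIntegral_eq_integral_of_forall_compl_eq_zero fun ζ hζ => by rw [hgK ζ hζ, zero_mul]
  simp only [hsupp] at hderiv
  exact hderiv.differentiableAt.differentiableWithinAt

theorem stmt_10_general (f₁ f₂ : ℂ → ℂ) (S₂ : Set ℂ)
    (hS₂ : IsClosed (Subtype.val ⁻¹' S₂ : Set {z : ℂ // z ≠ 0}))
    (hf₁ : ContinuousOn f₁ {(0 : ℂ)}ᶜ)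
    (hf₁supp : IsCompact (tsupport f₁)) (hf₁supp0 : tsupport f₁ ⊆ {(0 : ℂ)}ᶜ)
    (hf₂ : DifferentiableOn ℂ f₂ ({(0 : ℂ)}ᶜ \ S₂))
    (U : Set ℂ) (hU : IsOpen U) (hU0 : U ⊆ {(0 : ℂ)}ᶜ)
    (hdisj : (tsupport f₁ * S₂) ∩ U = ∅) :
    DifferentiableOn ℂ (fun z : ℂ => ∫ ζ : ℂ, f₁ ζ * f₂ (z / ζ)) U :=
  differentiableOn_integral_mul_comp_div hf₁supp (fun h0 => hf₁supp0 h0 rfl)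
    (hf₁.mono hf₁supp0) (fun _ => image_eq_zero_of_notMem_tsupport)
    (isOpen_compl_singleton.diff_of_isClosed_preimage_val hS₂) hf₂ hU
    fun _ hz _ hζ => ⟨div_ne_zero (hU0 hz) (hf₁supp0 hζ),
      div_notMem_of_mul_inter_eq_empty hdisj hz hζ (hf₁supp0 hζ)⟩

/-- Let `f₁` be continuous on `ℂ* = ℂ \ {0}` with compact support contained in `ℂ*`, and let
`f₂` be continuous on `ℂ*` and holomorphic on `ℂ* \ S₂` for a closed subset `S₂` of `ℂ*`.
Then `z ↦ ∫_{ℂ} f₁(ζ) f₂(z/ζ) dA(ζ)` is holomorphic on every open `U ⊆ ℂ*` disjoint from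
`(supp f₁)·S₂`. -/
theorem stmt_10 (f₁ f₂ : ℂ → ℂ) (S₂ : Set ℂ) (hS₂0 : S₂ ⊆ {(0 : ℂ)}ᶜ)
    (hS₂ : IsClosed (Subtype.val ⁻¹' S₂ : Set {z : ℂ // z ≠ 0}))
    (hf₁ : ContinuousOn f₁ {(0 : ℂ)}ᶜ)
    (hf₁supp : IsCompact (tsupport f₁)) (hf₁supp0 : tsupport f₁ ⊆ {(0 : ℂ)}ᶜ)
    (hf₂c : ContinuousOn f₂ {(0 : ℂ)}ᶜ)
    (hf₂ : DifferentiableOn ℂ f₂ ({(0 : ℂ)}ᶜ \ S₂))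
    (U : Set ℂ) (hU : IsOpen U) (hU0 : U ⊆ {(0 : ℂ)}ᶜ)
    (hdisj : (tsupport f₁ * S₂) ∩ U = ∅) :
    DifferentiableOn ℂ (fun z : ℂ => ∫ ζ : ℂ, f₁ ζ * f₂ (z / ζ)) U :=
  stmt_10_general f₁ f₂ S₂ hS₂ hf₁ hf₁supp hf₁supp0 hf₂ U hU hU0 hdisj
end

section
/- Let S₁ = {(2m)! : m ∈ ℕ} ⊆ ℂ* and S₂ = {1/(2n+1)! : n ∈ ℕ} ⊆ ℂ*. Then S₁ and S₂ are closed in ℂ* and are convolvable (S₁ ∩ K·S₂⁻¹ is compact for every compact K ⊆ ℂ*), but the closures of S₁ and S₂ in the Riemann sphere are not star-eligible, i.e. (closure S₁ × closure S₂) ∩ {(0,∞),(∞,0)} ≠ ∅. -/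
open scoped Pointwise
open OnePoint Filter Topology Set Nat

/-!
Both sets are ranges of factorial sequences: `(2m)! → ∞` and `1/(2n+1)! → 0`, which gives closedness
in `ℂ*` and the point `(∞, 0)` in the product of the closures. For convolvability, an element
`(2m)!` of `S₁ ∩ K·S₂⁻¹` is `(2m)! = k · (2n+1)!` with `k ∈ K`, so both `(2m)!/(2n+1)! = ‖k‖` and its
inverse are bounded on `K`. If `m ≤ n` the inverse is at least `2m + 1`, and if `n < m` the ratio is
at least `2m`; either way `m` is bounded.
-/

lemma isClosed_range_of_tendsto_cocompact {X : Type*} [TopologicalSpace X] [T2Space X]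
    [CompactlyGeneratedSpace X] {u : ℕ → X} (hu : Tendsto u atTop (cocompact X)) :
    IsClosed (range u) :=
  (isProperMap_iff_tendsto_cocompact.2 ⟨continuous_of_discreteTopology,
    by rwa [cocompact_eq_cofinite, Nat.cofinite_eq_atTop]⟩).isClosed_range

lemma isClosed_preimage_val_range_of_tendsto {X : Type*} [TopologicalSpace X] [T2Space X]
    {u : ℕ → X} {x : X} (hu : Tendsto u atTop (𝓝 x)) :
    IsClosed ((↑) ⁻¹' range u : Set {y : X // y ≠ x}) := by
  have : ((↑) ⁻¹' range u : Set {y : X // y ≠ x}) = (↑) ⁻¹' insert x (range u) := by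
    ext ⟨y, hy⟩
    simp [hy]
  rw [this]
  exact hu.isCompact_insert_range.isClosed.preimage continuous_subtype_val

lemma tendsto_factorial_comp_cobounded {f : ℕ → ℕ} (hf : Tendsto f atTop atTop) :
    Tendsto (fun n => ((f n)! : ℂ)) atTop (Bornology.cobounded ℂ) :=
  tendsto_natCast_atTop_cobounded.comp <|
    (tendsto_atTop_mono self_le_factorial tendsto_id).comp hf

lemma natCast_le_max_of_factorial_ratios_le {m n : ℕ} {R C : ℝ}
    (hR : ((2 * m)! : ℝ) / (2 * n + 1)! ≤ R) (hC : ((2 * n + 1)! : ℝ) / (2 * m)! ≤ C) :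
    (m : ℝ) ≤ max R C := by
  rcases le_or_gt m n with hmn | hnm
  · have hfac : (2 * m + 1) * (2 * m)! ≤ (2 * n + 1)! :=
      (factorial_succ (2 * m)).symm.trans_le (factorial_le (by omega))
    have : ((2 * m + 1 : ℕ) : ℝ) ≤ ((2 * n + 1)! : ℝ) / (2 * m)! := by
      rw [le_div_iff₀ (by positivity)]
      exact_mod_cast hfac
    push_cast at this
    exact le_max_of_le_right (by linarith)
  · obtain ⟨k, rfl⟩ : ∃ k, m = k + 1 := ⟨m - 1, by omega⟩
    have hfac : (2 * k + 2) * (2 * n + 1)! ≤ (2 * (k + 1))! := by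
      rw [show 2 * (k + 1) = 2 * k + 1 + 1 by ring, factorial_succ (2 * k + 1)]
      exact Nat.mul_le_mul_left _ (factorial_le (by omega))
    have : ((2 * k + 2 : ℕ) : ℝ) ≤ ((2 * (k + 1))! : ℝ) / (2 * n + 1)! := by
      rw [le_div_iff₀ (by positivity)]
      exact_mod_cast hfac
    push_cast at this ⊢
    exact le_max_of_le_left (by linarith)

lemma isCompact_range_factorial_inter_mul_inv {K : Set ℂ} (hK : IsCompact K)
    (hK0 : K ⊆ {0}ᶜ) :
    IsCompact ((range fun m : ℕ => ((2 * m)! : ℂ)) ∩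
      (K * (range fun n : ℕ => (((2 * n + 1)! : ℂ))⁻¹)⁻¹)) := by
  obtain ⟨R, hR⟩ := hK.isBounded.exists_norm_le
  obtain ⟨C, hC⟩ := hK.exists_bound_of_continuousOn (continuousOn_inv₀.mono hK0)
  refine (((finite_Iic ⌈max R C⌉₊).image fun m : ℕ => ((2 * m)! : ℂ)).subset ?_).isCompact
  rintro _ ⟨⟨m, rfl⟩, k, hk, w, hw, hkw⟩
  rw [inv_range] at hw
  obtain ⟨n, rfl⟩ := hw
  have hk_eq : k = ((2 * m)! : ℂ) / (2 * n + 1)! := by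
    simp only at hkw
    rw [← hkw, inv_inv, mul_div_cancel_right₀ _ (cast_ne_zero.2 (factorial_ne_zero _))]
  have hk_norm : ‖k‖ = ((2 * m)! : ℝ) / (2 * n + 1)! := by
    rw [hk_eq, norm_div, Complex.norm_natCast, Complex.norm_natCast]
  have hk_inv_norm : ‖k⁻¹‖ = ((2 * n + 1)! : ℝ) / (2 * m)! := by
    rw [norm_inv, hk_norm, inv_div]
  refine ⟨m, ?_, rfl⟩
  exact_mod_cast (natCast_le_max_of_factorial_ratios_le (hk_norm ▸ hR k hk)
    (hk_inv_norm ▸ hC k hk)).trans (le_ceil _)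

/-- The sets `S₁ = {(2m)! : m ∈ ℕ}` and `S₂ = {1/(2n+1)! : n ∈ ℕ}` are closed subsets of
`ℂ* = ℂ \ {0}` and are convolvable (`S₁ ∩ K·S₂⁻¹` compact for every compact `K ⊆ ℂ*`),
but their closures in the Riemann sphere `ℙ¹ = OnePoint ℂ` are not star-eligible:
the product of the closures meets `{(0,∞), (∞,0)}`. -/
theorem stmt_11 (S₁ S₂ : Set ℂ)
    (hS₁def : S₁ = {z : ℂ | ∃ m : ℕ, z = ((2 * m).factorial : ℂ)})
    (hS₂def : S₂ = {z : ℂ | ∃ n : ℕ, z = (((2 * n + 1).factorial : ℂ))⁻¹}) :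
    IsClosed (Subtype.val ⁻¹' S₁ : Set {z : ℂ // z ≠ 0}) ∧
    IsClosed (Subtype.val ⁻¹' S₂ : Set {z : ℂ // z ≠ 0}) ∧
    (∀ K : Set ℂ, IsCompact K → K ⊆ {(0 : ℂ)}ᶜ → IsCompact (S₁ ∩ (K * S₂⁻¹))) ∧
    ((closure ((fun z : ℂ => (z : OnePoint ℂ)) '' S₁) ×ˢ
        closure ((fun z : ℂ => (z : OnePoint ℂ)) '' S₂)) ∩
      {p : OnePoint ℂ × OnePoint ℂ |
        p = (((0 : ℂ) : OnePoint ℂ), (∞ : OnePoint ℂ)) ∨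
        p = ((∞ : OnePoint ℂ), ((0 : ℂ) : OnePoint ℂ))}).Nonempty := by
  obtain rfl : S₁ = range fun m : ℕ => ((2 * m)! : ℂ) := by
    rw [hS₁def]; ext; exact exists_congr fun _ => eq_comm
  obtain rfl : S₂ = range fun n : ℕ => (((2 * n + 1)! : ℂ))⁻¹ := by
    rw [hS₂def]; ext; exact exists_congr fun _ => eq_comm
  have h_even : Tendsto (fun m : ℕ => ((2 * m)! : ℂ)) atTop (cocompact ℂ) :=
    Metric.cobounded_eq_cocompact (α := ℂ) ▸
      tendsto_factorial_comp_cobounded <|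
        tendsto_atTop_mono (fun m => show m ≤ 2 * m by omega) tendsto_id
  have h_odd : Tendsto (fun n : ℕ => (((2 * n + 1)! : ℂ))⁻¹) atTop (𝓝 0) :=
    tendsto_inv₀_cobounded.comp <| tendsto_factorial_comp_cobounded <|
      tendsto_atTop_mono (fun n => show n ≤ 2 * n + 1 by omega) tendsto_id
  refine ⟨(isClosed_range_of_tendsto_cocompact h_even).preimage continuous_subtype_val,
    isClosed_preimage_val_range_of_tendsto h_odd,
    fun K hK hK0 => isCompact_range_factorial_inter_mul_inv hK hK0,
    ⟨(∞, ((0 : ℂ) : OnePoint ℂ)), ⟨?_, ?_⟩, Or.inr rfl⟩⟩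
  · have h : Tendsto (fun m : ℕ => (((2 * m)! : ℂ) : OnePoint ℂ)) atTop (𝓝 ∞) :=
      tendsto_coe_infty.comp (coclosedCompact_eq_cocompact (X := ℂ) ▸ h_even)
    exact mem_closure_of_tendsto h (.of_forall fun m => mem_image_of_mem _ (mem_range_self m))
  · exact mem_closure_of_tendsto ((continuous_coe.tendsto 0).comp h_odd)
      (.of_forall fun n => mem_image_of_mem _ (mem_range_self n))
end

section
/- Let S₁ and S₂ be closed subsets of the Riemann sphere ℙ¹ = ℂ ∪ {∞} which are star-eligible, and suppose S₁ ∩ ℂ* and S₂ ∩ ℂ* are closed in ℂ*. If z ∈ ℂ* \ (S₁·S₂), then z·S₂⁻¹ is a closed subset of ℙ¹ \ S₁ and S₁ is a compact subset of ℙ¹ \ z·S₂⁻¹, where the multiplication and inversion are extended continuously to ℙ¹ as in the extended multiplication M = (ℙ¹×ℙ¹)\{(0,∞),(∞,0)}. -/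
open OnePoint

/-- The continuous extension of multiplication to the Riemann sphere `ℙ¹ = OnePoint ℂ`,
defined on `M = (ℙ¹ × ℙ¹) \ {(0,∞), (∞,0)}` (the value at the two excluded points is a
junk value `∞`). -/
noncomputable def pmul (x y : OnePoint ℂ) : OnePoint ℂ :=
  match x, y with
  | (a : ℂ), (b : ℂ) => ((a * b : ℂ) : OnePoint ℂ)
  | _, _ => ∞

/-- The continuous extension of inversion to the Riemann sphere, with `0⁻¹ = ∞` and
`∞⁻¹ = 0`. -/
noncomputable def pinv (x : OnePoint ℂ) : OnePoint ℂ :=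
  match x with
  | (a : ℂ) => if a = 0 then ∞ else ((a⁻¹ : ℂ) : OnePoint ℂ)
  | _ => ((0 : ℂ) : OnePoint ℂ)

/-!
For `z ≠ 0` the map `w ↦ z·w⁻¹` is continuous on the compact Hausdorff space `ℙ¹`, so it sends
the closed set `S₂` to a compact, hence closed, set. This set misses `S₁`: if `z·w⁻¹ ∈ S₁` with
`w ∈ S₂`, then either `w ∈ {0, ∞}` and `(z·w⁻¹, w)` is one of the pairs `(∞, 0)`, `(0, ∞)`
excluded from `S₁ × S₂`, or `z = (z·w⁻¹)·w ∈ S₁·S₂`.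
-/

open Filter Bornology Topology

@[simp] lemma pmul_coe_coe (a b : ℂ) :
    pmul (a : OnePoint ℂ) (b : OnePoint ℂ) = ((a * b : ℂ) : OnePoint ℂ) :=
  rfl

@[simp] lemma pmul_infty_right (x : OnePoint ℂ) : pmul x ∞ = ∞ := by
  induction x using OnePoint.rec <;> rfl

@[simp] lemma pinv_infty : pinv ∞ = ((0 : ℂ) : OnePoint ℂ) := rfl

@[simp] lemma pinv_zero : pinv ((0 : ℂ) : OnePoint ℂ) = ∞ := if_pos rfl

lemma pinv_coe_of_ne_zero {b : ℂ} (hb : b ≠ 0) :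
    pinv (b : OnePoint ℂ) = ((b⁻¹ : ℂ) : OnePoint ℂ) :=
  if_neg hb

lemma pmul_coe_eq_map (z : ℂ) : pmul (z : OnePoint ℂ) = OnePoint.map (z * ·) := by
  funext w
  induction w using OnePoint.rec <;> rfl

lemma coclosedCompact_complex : coclosedCompact ℂ = cobounded ℂ := by
  rw [coclosedCompact_eq_cocompact, Metric.cobounded_eq_cocompact]

lemma continuous_pmul_coe_left {z : ℂ} (hz : z ≠ 0) : Continuous (pmul (z : OnePoint ℂ)) := by
  rw [pmul_coe_eq_map, OnePoint.continuous_map_iff, coclosedCompact_complex]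
  exact ⟨continuous_const_mul z, tendsto_mul_left_cobounded hz⟩

lemma tendsto_pinv_coe_nhdsNE_zero :
    Tendsto (fun b : ℂ => pinv b) (𝓝[≠] 0) (map (↑) (coclosedCompact ℂ)) := by
  rw [coclosedCompact_complex]
  refine (tendsto_map.comp tendsto_inv₀_nhdsNE_zero).congr' ?_
  filter_upwards [self_mem_nhdsWithin] with b hb
  exact (pinv_coe_of_ne_zero hb).symm

lemma continuousAt_pinv_coe {b : ℂ} (hb : b ≠ 0) : ContinuousAt (fun c : ℂ => pinv c) b := by
  refine ((continuous_coe.continuousAt).comp (continuousAt_inv₀ hb)).congr ?_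
  filter_upwards [isOpen_ne.mem_nhds hb] with c hc
  exact (pinv_coe_of_ne_zero hc).symm

lemma continuous_pinv : Continuous pinv := by
  rw [OnePoint.continuous_iff, pinv_infty, coclosedCompact_complex, continuous_iff_continuousAt]
  refine ⟨?_, fun b => ?_⟩
  · refine ((continuous_coe.tendsto 0).comp tendsto_inv₀_cobounded).congr' ?_
    filter_upwards [eventually_ne_cobounded (0 : ℂ)] with b hb
    exact (pinv_coe_of_ne_zero hb).symm
  · rcases eq_or_ne b 0 with rfl | hb
    · rw [ContinuousAt, pinv_zero, ← nhdsNE_sup_pure, nhds_infty_eq]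
      exact tendsto_pinv_coe_nhdsNE_zero.sup_sup (by simp)
    · exact continuousAt_pinv_coe hb

lemma pmul_pmul_pinv_coe_cancel (z : ℂ) {b : ℂ} (hb : b ≠ 0) :
    pmul (pmul (z : OnePoint ℂ) (pinv b)) b = z := by
  rw [pinv_coe_of_ne_zero hb, pmul_coe_coe, pmul_coe_coe, inv_mul_cancel_right₀ hb]

lemma image_pmul_pinv_subset_compl {S₁ S₂ : Set (OnePoint ℂ)}
    (hM : ∀ p ∈ S₁ ×ˢ S₂,
      p ≠ (((0 : ℂ) : OnePoint ℂ), (∞ : OnePoint ℂ)) ∧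
      p ≠ ((∞ : OnePoint ℂ), ((0 : ℂ) : OnePoint ℂ)))
    {z : ℂ} (hzS : (z : OnePoint ℂ) ∉ Set.image2 pmul S₁ S₂) :
    (fun w => pmul (z : OnePoint ℂ) (pinv w)) '' S₂ ⊆ S₁ᶜ := by
  rintro _ ⟨w, hw, rfl⟩ (hx : pmul (z : OnePoint ℂ) (pinv w) ∈ S₁)
  induction w using OnePoint.rec with
  | infty =>
    rw [pinv_infty, pmul_coe_coe, mul_zero] at hx
    exact (hM _ ⟨hx, hw⟩).1 rfl
  | coe b =>
    rcases eq_or_ne b 0 with rfl | hb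
    · rw [pinv_zero, pmul_infty_right] at hx
      exact (hM _ ⟨hx, hw⟩).2 rfl
    · exact hzS ⟨_, hx, _, hw, pmul_pmul_pinv_coe_cancel z hb⟩

theorem stmt_12_general (S₁ S₂ : Set (OnePoint ℂ)) (hS₁ : IsClosed S₁) (hS₂ : IsClosed S₂)
    (hM : ∀ p ∈ S₁ ×ˢ S₂,
      p ≠ (((0 : ℂ) : OnePoint ℂ), (∞ : OnePoint ℂ)) ∧
      p ≠ ((∞ : OnePoint ℂ), ((0 : ℂ) : OnePoint ℂ)))
    (z : ℂ) (hz : z ≠ 0) (hzS : ((z : OnePoint ℂ)) ∉ Set.image2 pmul S₁ S₂) :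
    (fun w => pmul (z : OnePoint ℂ) (pinv w)) '' S₂ ⊆ S₁ᶜ ∧
    IsClosed (Subtype.val ⁻¹' ((fun w => pmul (z : OnePoint ℂ) (pinv w)) '' S₂) :
      Set ↥(S₁ᶜ)) ∧
    IsCompact S₁ ∧
    S₁ ⊆ ((fun w => pmul (z : OnePoint ℂ) (pinv w)) '' S₂)ᶜ := by
  have hsub := image_pmul_pinv_subset_compl hM hzS
  have hclosed : IsClosed ((fun w => pmul (z : OnePoint ℂ) (pinv w)) '' S₂) :=
    (hS₂.isCompact.image ((continuous_pmul_coe_left hz).comp continuous_pinv)).isClosed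
  exact ⟨hsub, hclosed.preimage continuous_subtype_val, hS₁.isCompact,
    Set.subset_compl_comm.mp hsub⟩

/-- Let `S₁, S₂` be star-eligible closed subsets of `ℙ¹` whose traces on `ℂ*` are closed in
`ℂ*`. For `z ∈ ℂ* \ S₁·S₂`, the set `z·S₂⁻¹` is a closed subset of `ℙ¹ \ S₁`, and `S₁` is a
compact subset of `ℙ¹ \ z·S₂⁻¹`. -/
theorem stmt_12 (S₁ S₂ : Set (OnePoint ℂ)) (hS₁ : IsClosed S₁) (hS₂ : IsClosed S₂)
    (hS₁p : S₁ ≠ Set.univ) (hS₂p : S₂ ≠ Set.univ)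
    (hprodp : Set.image2 pmul S₁ S₂ ≠ Set.univ)
    (hM : ∀ p ∈ S₁ ×ˢ S₂,
      p ≠ (((0 : ℂ) : OnePoint ℂ), (∞ : OnePoint ℂ)) ∧
      p ≠ ((∞ : OnePoint ℂ), ((0 : ℂ) : OnePoint ℂ)))
    (hS₁t : IsClosed ((fun z : {w : ℂ // w ≠ 0} => ((z : ℂ) : OnePoint ℂ)) ⁻¹' S₁))
    (hS₂t : IsClosed ((fun z : {w : ℂ // w ≠ 0} => ((z : ℂ) : OnePoint ℂ)) ⁻¹' S₂))
    (z : ℂ) (hz : z ≠ 0) (hzS : ((z : OnePoint ℂ)) ∉ Set.image2 pmul S₁ S₂) :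
    (fun w => pmul (z : OnePoint ℂ) (pinv w)) '' S₂ ⊆ S₁ᶜ ∧
    IsClosed (Subtype.val ⁻¹' ((fun w => pmul (z : OnePoint ℂ) (pinv w)) '' S₂) :
      Set ↥(S₁ᶜ)) ∧
    IsCompact S₁ ∧
    S₁ ⊆ ((fun w => pmul (z : OnePoint ℂ) (pinv w)) '' S₂)ᶜ :=
  stmt_12_general S₁ S₂ hS₁ hS₂ hM z hz hzS
end

section
/- Let S₁, S₂ be closed subsets of ℙ¹ = ℂ ∪ {∞} with 0, ∞ ∉ S₁ and 0 ∈ S₂, ∞ ∉ S₂, star-eligible, and let f₁ ∈ Hol(ℙ¹ \ S₁), f₂ ∈ Hol(ℙ¹ \ S₂). Then for z in the common domain, (f₁ ⋆ f₂)(z) − (f₂ ⋆ f₁)(z) = f₁(0)·f₂(∞), where ⋆ denotes the generalized Hadamard product defined by integration over generalized Hadamard cycles. -/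
/-!
Put `Q ζ = f₁ ζ * f₂ (z / ζ)`. It is holomorphic off `S₁ ∪ z • S₂⁻¹` and, through the expansion
`f₂ w = g₂ w⁻¹` at `∞`, also at `0`, with `Q 0 = f₁ 0 * f₂ ∞`. The substitution `ζ ↦ z / ζ` turns
the integral over `η` defining `(f₂ ⋆ f₁) z` into minus the integral of `Q ζ / ζ` over the inverted
cycle `z / η`, whose winding number around `p` is `n(η, z / p) - n(η, 0)`. Hence the cycle
`γ + z / η` winds `0` times around every singularity of `Q` and once around `0`, and Cauchy's
integral formula for cycles, proved by Dixon's argument, gives `Q 0` for the difference.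
-/

open scoped Pointwise
open intervalIntegral

/-- The integral of `f` along the (C¹, `[0,1]`-parametrized) loop `γ`. -/
noncomputable def loopIntegral (γ : ℝ → ℂ) (f : ℂ → ℂ) : ℂ :=
  ∫ t in (0 : ℝ)..1, f (γ t) * deriv γ t

/-- The winding number (index) of the loop `γ` around the point `z`. -/
noncomputable def windingNumber (γ : ℝ → ℂ) (z : ℂ) : ℂ :=
  (2 * Real.pi * Complex.I)⁻¹ * loopIntegral γ fun w => (w - z)⁻¹

open Set Metric Filter Topology MeasureTheory

section LoopIntegral

variable {κ : ℝ → ℂ}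

lemma continuousOn_loopIntegrand (hκ : ContDiff ℝ 1 κ) {f : ℂ → ℂ}
    (hf : ContinuousOn f (κ '' uIcc 0 1)) :
    ContinuousOn (fun t => f (κ t) * deriv κ t) (uIcc 0 1) :=
  (hf.comp hκ.continuous.continuousOn (mapsTo_image _ _)).mul
    (hκ.continuous_deriv le_rfl).continuousOn

lemma loopIntegral_congr {f g : ℂ → ℂ} (h : EqOn f g (κ '' uIcc 0 1)) :
    loopIntegral κ f = loopIntegral κ g :=
  integral_congr fun t ht => by simp only [h (mem_image_of_mem κ ht)]

lemma loopIntegral_sub (hκ : ContDiff ℝ 1 κ) {f g : ℂ → ℂ}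
    (hf : ContinuousOn f (κ '' uIcc 0 1)) (hg : ContinuousOn g (κ '' uIcc 0 1)) :
    loopIntegral κ (fun ζ => f ζ - g ζ) = loopIntegral κ f - loopIntegral κ g := by
  simp only [loopIntegral, sub_mul]
  exact integral_sub (continuousOn_loopIntegrand hκ hf).intervalIntegrable
    (continuousOn_loopIntegrand hκ hg).intervalIntegrable

lemma loopIntegral_const_mul (c : ℂ) (f : ℂ → ℂ) :
    loopIntegral κ (fun ζ => c * f ζ) = c * loopIntegral κ f := by
  simp only [loopIntegral, mul_assoc, intervalIntegral.integral_const_mul]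

lemma norm_loopIntegral_le {f : ℂ → ℂ} {M C : ℝ} (hf : ∀ ζ ∈ κ '' uIcc 0 1, ‖f ζ‖ ≤ M)
    (hκ' : ∀ t ∈ uIcc (0 : ℝ) 1, ‖deriv κ t‖ ≤ C) (hM : 0 ≤ M) :
    ‖loopIntegral κ f‖ ≤ M * C := by
  simpa [loopIntegral] using norm_integral_le_of_norm_le_const (a := 0) (b := 1) fun t ht => by
    rw [norm_mul]
    exact mul_le_mul (hf _ (mem_image_of_mem κ (uIoc_subset_uIcc ht)))
      (hκ' t (uIoc_subset_uIcc ht)) (norm_nonneg _) hM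

lemma exists_norm_deriv_le (hκ : ContDiff ℝ 1 κ) : ∃ C, ∀ t ∈ uIcc (0 : ℝ) 1, ‖deriv κ t‖ ≤ C :=
  isCompact_uIcc.exists_bound_of_continuousOn (hκ.continuous_deriv le_rfl).continuousOn

lemma isCompact_loopImage (hκ : ContDiff ℝ 1 κ) : IsCompact (κ '' uIcc 0 1) :=
  isCompact_uIcc.image hκ.continuous

lemma loopIntegral_eq_zero_of_hasDerivAt (hκ : ContDiff ℝ 1 κ) (hloop : κ 0 = κ 1)
    {Φ φ : ℂ → ℂ} (hΦ : ∀ ζ ∈ κ '' uIcc 0 1, HasDerivAt Φ (φ ζ) ζ)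
    (hφ : ContinuousOn φ (κ '' uIcc 0 1)) :
    loopIntegral κ φ = 0 := by
  have hderiv : ∀ t ∈ uIcc (0 : ℝ) 1, HasDerivAt (Φ ∘ κ) (φ (κ t) * deriv κ t) t := fun t ht =>
    by simpa [mul_comm] using
      (hΦ _ (mem_image_of_mem κ ht)).comp t ((hκ.differentiable one_ne_zero) t).hasDerivAt
  rw [loopIntegral, integral_eq_sub_of_hasDerivAt hderiv
    (continuousOn_loopIntegrand hκ hφ).intervalIntegrable]
  simp [hloop]

lemma hasDerivAt_loopIntegral (hκ : ContDiff ℝ 1 κ) {G G' : ℂ → ℂ → ℂ} {w₀ : ℂ} {ε C : ℝ}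
    (hε : 0 < ε) (hG : ∀ w ∈ ball w₀ ε, ContinuousOn (G w) (κ '' uIcc 0 1))
    (hG' : ContinuousOn (G' w₀) (κ '' uIcc 0 1))
    (hbound : ∀ ζ ∈ κ '' uIcc 0 1, ∀ w ∈ ball w₀ ε, ‖G' w ζ‖ ≤ C)
    (hdiff : ∀ ζ ∈ κ '' uIcc 0 1, ∀ w ∈ ball w₀ ε, HasDerivAt (fun y => G y ζ) (G' w ζ) w) :
    HasDerivAt (fun w => loopIntegral κ (G w)) (loopIntegral κ (G' w₀)) w₀ := by
  obtain ⟨D, hD⟩ := exists_norm_deriv_le hκ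
  have hsub : uIoc (0 : ℝ) 1 ⊆ uIcc 0 1 := uIoc_subset_uIcc
  have hmeas : ∀ {g : ℝ → ℂ}, ContinuousOn g (uIcc 0 1) →
      AEStronglyMeasurable g (volume.restrict (uIoc 0 1)) := fun hg =>
    (hg.mono hsub).aestronglyMeasurable measurableSet_uIoc
  refine (hasDerivAt_integral_of_dominated_loc_of_deriv_le (bound := fun _ => C * D)
    (F := fun w t => G w (κ t) * deriv κ t) (F' := fun w t => G' w (κ t) * deriv κ t)
    (ball_mem_nhds w₀ hε) ?_ ?_ (hmeas (continuousOn_loopIntegrand hκ hG')) ?_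
    intervalIntegrable_const ?_).2
  · exact eventually_of_mem (ball_mem_nhds w₀ hε) fun w hw =>
      hmeas (continuousOn_loopIntegrand hκ (hG w hw))
  · exact (continuousOn_loopIntegrand hκ (hG w₀ (mem_ball_self hε))).intervalIntegrable
  · refine Eventually.of_forall fun t ht w hw => ?_
    have hC : 0 ≤ C := (norm_nonneg _).trans (hbound _ (mem_image_of_mem κ (hsub ht)) w hw)
    rw [norm_mul]
    exact mul_le_mul (hbound _ (mem_image_of_mem κ (hsub ht)) w hw) (hD t (hsub ht))
      (norm_nonneg _) hC
  · exact Eventually.of_forall fun t ht w hw =>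
      (hdiff _ (mem_image_of_mem κ (hsub ht)) w hw).mul_const _

end LoopIntegral

section CauchyKernel

variable {κ : ℝ → ℂ}

lemma hasDerivAt_loopIntegral_cauchyKernel (hκ : ContDiff ℝ 1 κ) {f : ℂ → ℂ}
    (hf : ContinuousOn f (κ '' uIcc 0 1)) {w : ℂ} (hw : w ∉ κ '' uIcc 0 1) :
    HasDerivAt (fun w => loopIntegral κ fun ζ => f ζ * (ζ - w)⁻¹)
      (loopIntegral κ fun ζ => f ζ * ((ζ - w) ^ 2)⁻¹) w := by
  obtain ⟨d, hd, hball⟩ := isOpen_iff.mp (isCompact_loopImage hκ).isClosed.isOpen_compl w hw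
  obtain ⟨M, hM⟩ := (isCompact_loopImage hκ).exists_bound_of_continuousOn hf
  have hfar : ∀ ζ ∈ κ '' uIcc 0 1, ∀ x ∈ ball w (d / 2), d / 2 ≤ ‖ζ - x‖ := by
    intro ζ hζ x hx
    have hζw : d ≤ dist ζ w := not_lt.mp fun h => hball h hζ
    have := dist_triangle ζ x w
    rw [mem_ball] at hx
    rw [← dist_eq_norm]
    linarith
  have hne : ∀ ζ ∈ κ '' uIcc 0 1, ∀ x ∈ ball w (d / 2), ζ - x ≠ 0 := fun ζ hζ x hx h => by
    linarith [hfar ζ hζ x hx, norm_eq_zero.mpr h]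
  refine hasDerivAt_loopIntegral hκ (G := fun w ζ => f ζ * (ζ - w)⁻¹)
    (G' := fun w ζ => f ζ * ((ζ - w) ^ 2)⁻¹) (C := M * (2 / d) ^ 2) (half_pos hd)
    (fun x hx => hf.mul (ContinuousOn.fun_inv₀ (by fun_prop) fun ζ hζ => hne ζ hζ x hx))
    (hf.mul (ContinuousOn.fun_inv₀ (by fun_prop) fun ζ hζ =>
      pow_ne_zero 2 (hne ζ hζ w (mem_ball_self (half_pos hd))))) (fun ζ hζ x hx => ?_)
    (fun ζ hζ x hx => ?_)
  · have hpos : 0 < ‖ζ - x‖ := norm_pos_iff.mpr (hne ζ hζ x hx)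
    rw [norm_mul, norm_inv, norm_pow]
    refine mul_le_mul (hM ζ hζ) ?_ (by positivity) ((norm_nonneg _).trans (hM ζ hζ))
    rw [← inv_pow]
    refine pow_le_pow_left₀ (inv_nonneg.mpr hpos.le) ?_ 2
    rw [inv_le_comm₀ hpos (by positivity), inv_div]
    exact hfar ζ hζ x hx
  · exact ((((hasDerivAt_id' x).const_sub ζ).fun_inv (hne ζ hζ x hx)).const_mul (f ζ)).congr_deriv
      (by ring)

lemma hasDerivAt_windingNumber (hκ : ContDiff ℝ 1 κ) (hloop : κ 0 = κ 1) {w : ℂ}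
    (hw : w ∉ κ '' uIcc 0 1) : HasDerivAt (windingNumber κ) 0 w := by
  have h := (hasDerivAt_loopIntegral_cauchyKernel hκ (f := fun _ => 1) continuousOn_const
    hw).const_mul (2 * Real.pi * Complex.I)⁻¹
  simp only [one_mul] at h
  have hne : ∀ ζ ∈ κ '' uIcc 0 1, ζ - w ≠ 0 := fun ζ hζ h => hw (sub_eq_zero.mp h ▸ hζ)
  have hexact : (loopIntegral κ fun ζ => ((ζ - w) ^ 2)⁻¹) = 0 :=
    loopIntegral_eq_zero_of_hasDerivAt hκ hloop (Φ := fun ζ => -(ζ - w)⁻¹)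
      (φ := fun ζ => ((ζ - w) ^ 2)⁻¹)
      (fun ζ hζ => by
        simpa [div_eq_mul_inv] using
          (((hasDerivAt_id ζ).sub_const w).fun_inv (hne ζ hζ)).fun_neg)
      (ContinuousOn.fun_inv₀ (by fun_prop) fun ζ hζ => pow_ne_zero 2 (hne ζ hζ))
  rwa [hexact, mul_zero] at h

lemma windingNumber_eq_of_mem_ball (hκ : ContDiff ℝ 1 κ) (hloop : κ 0 = κ 1) {w w' : ℂ}
    {r : ℝ} (hball : ball w r ⊆ (κ '' uIcc 0 1)ᶜ) (hw' : w' ∈ ball w r) :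
    windingNumber κ w' = windingNumber κ w :=
  isOpen_ball.is_const_of_deriv_eq_zero (convex_ball w r).isPreconnected
    (fun _ hx =>
      (hasDerivAt_windingNumber hκ hloop (hball hx)).differentiableAt.differentiableWithinAt)
    (fun _ hx => (hasDerivAt_windingNumber hκ hloop (hball hx)).deriv) hw'
    (mem_ball_self (pos_of_mem_ball hw'))

/-- Far from the loop, `ζ ↦ log (1 - ζ / p)` is a primitive of `(ζ - p)⁻¹`. -/
lemma windingNumber_eq_zero_of_lt_norm (hκ : ContDiff ℝ 1 κ) (hloop : κ 0 = κ 1) {R : ℝ}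
    (hR : κ '' uIcc 0 1 ⊆ closedBall 0 R) {p : ℂ} (hp : R < ‖p‖) : windingNumber κ p = 0 := by
  have hp0 : p ≠ 0 := norm_pos_iff.mp ((norm_nonneg _).trans_lt ((mem_closedBall_zero_iff.mp
    (hR (mem_image_of_mem κ (left_mem_uIcc (a := (0 : ℝ)) (b := 1))))).trans_lt hp))
  have hlt : ∀ ζ ∈ κ '' uIcc 0 1, ‖-(ζ / p)‖ < 1 := fun ζ hζ => by
    rw [norm_neg, norm_div, div_lt_one (norm_pos_iff.mpr hp0)]
    exact (mem_closedBall_zero_iff.mp (hR hζ)).trans_lt hp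
  rw [windingNumber, loopIntegral_eq_zero_of_hasDerivAt hκ hloop
    (Φ := fun ζ => Complex.log (1 + -(ζ / p))) (φ := fun ζ => (ζ - p)⁻¹) (fun ζ hζ => ?_)
    (ContinuousOn.fun_inv₀ (by fun_prop) fun ζ hζ h => ?_), mul_zero]
  · have hne : ζ - p ≠ 0 := fun h => by simpa [sub_eq_zero.mp h, hp0] using hlt ζ hζ
    convert (((hasDerivAt_id' ζ).div_const p).fun_neg.const_add 1).clog
      (Complex.mem_slitPlane_of_norm_lt_one (hlt ζ hζ)) using 1
    field_simp
    rw [show p + -ζ = -(ζ - p) by ring, div_neg, neg_neg, div_self hne]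
  · simpa [sub_eq_zero.mp h, hp0] using hlt ζ hζ

end CauchyKernel

section Dslope

variable {f : ℂ → ℂ}

lemma dslope_comm (f : ℂ → ℂ) (a b : ℂ) : dslope f a b = dslope f b a := by
  rcases eq_or_ne b a with rfl | h
  · rfl
  · rw [dslope_of_ne f h, dslope_of_ne f h.symm, slope_comm]

lemma norm_dslope_le_of_le_dist {a u : ℂ} {M δ : ℝ} (hδ : 0 < δ) (hau : δ ≤ dist u a)
    (hu : ‖f u‖ ≤ M) (ha : ‖f a‖ ≤ M) : ‖dslope f a u‖ ≤ 2 * M / δ := by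
  have hne : u ≠ a := fun h => by simp [h] at hau; linarith
  rw [dslope_of_ne f hne, slope_def_field, norm_div, ← dist_eq_norm u a]
  exact div_le_div₀ (by linarith [(norm_nonneg _).trans hu])
    ((norm_sub_le _ _).trans (by linarith)) hδ hau

/-- Differentiating `(w - a) • dslope f a w = f w - f a` at `x`. -/
lemma hasDerivAt_dslope_dslope {Ω : Set ℂ} (hΩ : IsOpen Ω) (hf : DifferentiableOn ℂ f Ω)
    {a x : ℂ} (ha : a ∈ Ω) (hx : x ∈ Ω) :
    HasDerivAt (dslope f a) (dslope (dslope f x) x a) x := by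
  have hda : HasDerivAt (dslope f a) (deriv (dslope f a) x) x :=
    (((Complex.differentiableOn_dslope (hΩ.mem_nhds ha)).mpr hf).differentiableAt
      (hΩ.mem_nhds hx)).hasDerivAt
  rcases eq_or_ne x a with rfl | hxa
  · rwa [dslope_same]
  have hprod : HasDerivAt (fun w => (w - a) * dslope f a w)
      (1 * dslope f a x + (x - a) * deriv (dslope f a) x) x :=
    ((hasDerivAt_id' x).sub_const a).mul hda
  have hfx : HasDerivAt (fun w => f w - f a) (deriv f x) x :=
    ((hf.differentiableAt (hΩ.mem_nhds hx)).hasDerivAt).sub_const _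
  have heq : (fun w => (w - a) * dslope f a w) = fun w => f w - f a :=
    funext fun w => by simpa using sub_smul_dslope f a w
  rw [heq] at hprod
  have hD := hprod.unique hfx
  convert hda using 1
  rw [dslope_of_ne _ hxa.symm, slope_def_field, dslope_same, dslope_comm f x a]
  rw [div_eq_iff (sub_ne_zero.mpr hxa.symm)]
  linear_combination hD

/-- Maximum modulus on `ball w₀ (5 * δ)` when `a` is close to `w₀`; otherwise `a` is far from
`u`. -/
lemma exists_bound_dslope {Ω K : Set ℂ} (hΩ : IsOpen Ω) (hf : DifferentiableOn ℂ f Ω)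
    (hK : IsCompact K) (hKΩ : K ⊆ Ω) {w₀ : ℂ} {δ : ℝ} (hδ : 0 < δ)
    (hball : closedBall w₀ (5 * δ) ⊆ Ω) :
    ∃ C, ∀ a ∈ K, ∀ u ∈ closedBall w₀ (3 * δ), ‖dslope f a u‖ ≤ C := by
  obtain ⟨M, hM⟩ := (hK.union (isCompact_closedBall w₀ (5 * δ))).exists_bound_of_continuousOn
    (hf.continuousOn.mono (union_subset hKΩ hball))
  refine ⟨2 * M / δ, fun a ha u hu => ?_⟩
  rw [mem_closedBall] at hu
  by_cases hfar : 4 * δ ≤ dist a w₀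
  · refine norm_dslope_le_of_le_dist hδ ?_ (hM u (Or.inr (mem_closedBall.mpr (by linarith))))
      (hM a (Or.inl ha))
    linarith [dist_triangle a u w₀, dist_comm a u]
  have hU : DiffContOnCl ℂ (dslope f a) (ball w₀ (5 * δ)) := by
    refine DifferentiableOn.diffContOnCl ?_
    rw [closure_ball w₀ (by positivity)]
    exact ((Complex.differentiableOn_dslope (hΩ.mem_nhds (hKΩ ha))).mpr hf).mono hball
  refine Complex.norm_le_of_forall_mem_frontier_norm_le isBounded_ball hU (fun ζ hζ => ?_)
    (subset_closure (mem_ball.mpr (by linarith)))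
  rw [frontier_ball w₀ (by positivity : 5 * δ ≠ 0), mem_sphere] at hζ
  refine norm_dslope_le_of_le_dist hδ ?_ (hM ζ (Or.inr (mem_closedBall.mpr hζ.le)))
    (hM a (Or.inl ha))
  linarith [dist_triangle ζ a w₀]

end Dslope

section DifferenceQuotient

variable {f : ℂ → ℂ} {Ω : Set ℂ}

lemma differentiableAt_loopIntegral_dslope (hΩ : IsOpen Ω) (hf : DifferentiableOn ℂ f Ω)
    {κ : ℝ → ℂ} (hκ : ContDiff ℝ 1 κ) (hκΩ : κ '' uIcc 0 1 ⊆ Ω) {w₀ : ℂ} (hw₀ : w₀ ∈ Ω) :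
    DifferentiableAt ℂ (fun w => loopIntegral κ (dslope f w)) w₀ := by
  obtain ⟨r, hr, hrΩ⟩ := isOpen_iff.mp hΩ w₀ hw₀
  set δ := r / 6
  have hδ : 0 < δ := by positivity
  have h5δ : 5 * δ < r := by dsimp only [δ]; linarith
  have hsub : ∀ {s}, s ≤ 5 * δ → closedBall w₀ s ⊆ Ω := fun hs =>
    (closedBall_subset_ball (by linarith)).trans hrΩ
  obtain ⟨C, hC⟩ := exists_bound_dslope hΩ hf (isCompact_loopImage hκ) hκΩ hδ (hsub le_rfl)
  have hmem : ∀ x ∈ ball w₀ δ, x ∈ Ω := fun x hx => hsub (by linarith) (ball_subset_closedBall hx)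
  have hdslope : ∀ a ∈ Ω, DifferentiableOn ℂ (dslope f a) Ω := fun a ha =>
    (Complex.differentiableOn_dslope (hΩ.mem_nhds ha)).mpr hf
  refine (hasDerivAt_loopIntegral hκ (G := fun w ζ => dslope f w ζ)
    (G' := fun w ζ => dslope (dslope f w) w ζ) (C := C / (2 * δ)) hδ
    (fun x hx => (hdslope x (hmem x hx)).continuousOn.mono hκΩ)
    (((Complex.differentiableOn_dslope (hΩ.mem_nhds hw₀)).mpr
      (hdslope w₀ hw₀)).continuousOn.mono hκΩ) (fun ζ hζ x hx => ?_)
    (fun ζ hζ x hx => ?_)).differentiableAt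
  · have hball : closedBall x (2 * δ) ⊆ closedBall w₀ (3 * δ) := fun u hu => by
      rw [mem_closedBall] at hu ⊢
      linarith [dist_triangle u x w₀, mem_ball.mp hx]
    rw [← (hasDerivAt_dslope_dslope hΩ hf (hκΩ hζ) (hmem x hx)).deriv]
    refine Complex.norm_deriv_le_of_forall_mem_sphere_norm_le (by positivity) ?_
      fun u hu => hC ζ hζ u (hball (sphere_subset_closedBall hu))
    refine DifferentiableOn.diffContOnCl ?_
    rw [closure_ball x (by positivity)]
    exact (hdslope _ (hκΩ hζ)).mono (hball.trans (hsub (by linarith)))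
  · simpa only [dslope_comm f _ ζ] using hasDerivAt_dslope_dslope hΩ hf (hκΩ hζ) (hmem x hx)

lemma loopIntegral_dslope {κ : ℝ → ℂ} (hκ : ContDiff ℝ 1 κ) (hf : ContinuousOn f (κ '' uIcc 0 1))
    {w : ℂ} (hw : w ∉ κ '' uIcc 0 1) :
    loopIntegral κ (dslope f w) = (loopIntegral κ fun ζ => f ζ * (ζ - w)⁻¹) -
      2 * Real.pi * Complex.I * windingNumber κ w * f w := by
  have hker : ContinuousOn (fun ζ => (ζ - w)⁻¹) (κ '' uIcc 0 1) :=
    ContinuousOn.fun_inv₀ (by fun_prop) fun ζ hζ => sub_ne_zero.mpr (ne_of_mem_of_not_mem hζ hw)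
  rw [loopIntegral_congr (g := fun ζ => f ζ * (ζ - w)⁻¹ - f w * (ζ - w)⁻¹) fun ζ hζ => by
      simp only [dslope_of_ne f (ne_of_mem_of_not_mem hζ hw), slope_def_field]; ring,
    loopIntegral_sub hκ (f := fun ζ => f ζ * (ζ - w)⁻¹) (g := fun ζ => f w * (ζ - w)⁻¹)
      (hf.mul hker) (continuousOn_const.mul hker), loopIntegral_const_mul,
    windingNumber, ← mul_assoc, mul_inv_cancel₀ Complex.two_pi_I_ne_zero]
  ring

lemma tendsto_loopIntegral_cauchyKernel {κ : ℝ → ℂ} (hκ : ContDiff ℝ 1 κ)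
    (hf : ContinuousOn f (κ '' uIcc 0 1)) :
    Tendsto (fun w => loopIntegral κ fun ζ => f ζ * (ζ - w)⁻¹) (cocompact ℂ) (𝓝 0) := by
  obtain ⟨M, hM⟩ := (isCompact_loopImage hκ).exists_bound_of_continuousOn hf
  obtain ⟨D, hD⟩ := exists_norm_deriv_le hκ
  obtain ⟨R, hR⟩ := (isCompact_loopImage hκ).isBounded.subset_closedBall 0
  have hM0 : 0 ≤ M := (norm_nonneg _).trans (hM _ (mem_image_of_mem κ left_mem_uIcc))
  have hdecay : Tendsto (fun w : ℂ => M * (‖w‖ - R)⁻¹ * D) (cocompact ℂ) (𝓝 0) := by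
    simpa [sub_eq_add_neg] using ((tendsto_inv_atTop_zero.comp
      (tendsto_atTop_add_const_right _ (-R) tendsto_norm_cocompact_atTop)).const_mul M).mul_const D
  refine squeeze_zero_norm' ?_ hdecay
  filter_upwards [tendsto_norm_cocompact_atTop.eventually_gt_atTop R] with w hw
  refine norm_loopIntegral_le (fun ζ hζ => ?_) hD (by positivity)
  have hζR : ‖ζ‖ ≤ R := mem_closedBall_zero_iff.mp (hR hζ)
  have hdist : ‖w‖ - R ≤ ‖ζ - w‖ := by linarith [norm_sub_norm_le w ζ, norm_sub_rev ζ w]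
  rw [norm_mul, norm_inv]
  exact mul_le_mul (hM ζ hζ) (inv_anti₀ (by linarith) hdist) (by positivity) hM0

end DifferenceQuotient

section CycleFormula

variable {f : ℂ → ℂ} {Ω : Set ℂ} {ι : Type*} [Fintype ι] {κ : ι → ℝ → ℂ}

lemma sum_loopIntegral_dslope (hκ : ∀ k, ContDiff ℝ 1 (κ k))
    (hf : ∀ k, ContinuousOn f (κ k '' uIcc 0 1)) {w : ℂ} (hw : ∀ k, w ∉ κ k '' uIcc 0 1) :
    ∑ k, loopIntegral (κ k) (dslope f w) = (∑ k, loopIntegral (κ k) fun ζ => f ζ * (ζ - w)⁻¹) -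
      2 * Real.pi * Complex.I * (∑ k, windingNumber (κ k) w) * f w := by
  simp only [loopIntegral_dslope (hκ _) (hf _) (hw _), Finset.sum_sub_distrib, Finset.mul_sum,
    Finset.sum_mul]

/-- Inside `Ω` the difference quotient is holomorphic; outside `Ω` the winding number vanishes
near the point, leaving a Cauchy integral. -/
lemma differentiable_sum_loopIntegral_dslope (hΩ : IsOpen Ω) (hf : DifferentiableOn ℂ f Ω)
    (hκ : ∀ k, ContDiff ℝ 1 (κ k)) (hloop : ∀ k, κ k 0 = κ k 1)
    (hκΩ : ∀ k, κ k '' uIcc 0 1 ⊆ Ω) (hW : ∀ p ∉ Ω, ∑ k, windingNumber (κ k) p = 0) :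
    Differentiable ℂ fun w => ∑ k, loopIntegral (κ k) (dslope f w) := by
  intro w
  by_cases hw : w ∈ Ω
  · exact DifferentiableAt.fun_sum fun k _ =>
      differentiableAt_loopIntegral_dslope hΩ hf (hκ k) (hκΩ k) hw
  have hfk : ∀ k, ContinuousOn f (κ k '' uIcc 0 1) := fun k => hf.continuousOn.mono (hκΩ k)
  have hK : IsClosed (⋃ k, κ k '' uIcc 0 1) :=
    (isCompact_iUnion fun k => isCompact_loopImage (hκ k)).isClosed
  obtain ⟨r, hr, hball⟩ := isOpen_iff.mp hK.isOpen_compl w fun h => hw <| by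
    obtain ⟨k, hk⟩ := mem_iUnion.mp h
    exact hκΩ k hk
  have hoff : ∀ w' ∈ ball w r, ∀ k, w' ∉ κ k '' uIcc 0 1 := fun w' hw' k h =>
    hball hw' (mem_iUnion.mpr ⟨k, h⟩)
  have heq : (fun w => ∑ k, loopIntegral (κ k) (dslope f w)) =ᶠ[𝓝 w]
      fun w => ∑ k, loopIntegral (κ k) fun ζ => f ζ * (ζ - w)⁻¹ := by
    filter_upwards [ball_mem_nhds w hr] with w' hw'
    rw [sum_loopIntegral_dslope hκ hfk (hoff w' hw'), Finset.sum_congr rfl fun k _ =>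
      windingNumber_eq_of_mem_ball (hκ k) (hloop k) (fun x hx => hoff x hx k) hw', hW w hw]
    ring
  exact heq.differentiableAt_iff.mpr <| DifferentiableAt.fun_sum fun k _ =>
    (hasDerivAt_loopIntegral_cauchyKernel (hκ k) (hfk k)
      (hoff w (mem_ball_self hr) k)).differentiableAt

/-- Cauchy's integral formula for cycles (Dixon): the entire function above tends to `0` at `∞`,
so it vanishes by Liouville's theorem. -/
theorem sum_loopIntegral_cauchyKernel_eq (hΩ : IsOpen Ω) (hf : DifferentiableOn ℂ f Ω)
    (hκ : ∀ k, ContDiff ℝ 1 (κ k)) (hloop : ∀ k, κ k 0 = κ k 1)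
    (hκΩ : ∀ k, κ k '' uIcc 0 1 ⊆ Ω) (hW : ∀ p ∉ Ω, ∑ k, windingNumber (κ k) p = 0) {w₀ : ℂ}
    (hoff : ∀ k, w₀ ∉ κ k '' uIcc 0 1) :
    ∑ k, loopIntegral (κ k) (fun ζ => f ζ * (ζ - w₀)⁻¹) =
      2 * Real.pi * Complex.I * (∑ k, windingNumber (κ k) w₀) * f w₀ := by
  have hfk : ∀ k, ContinuousOn f (κ k '' uIcc 0 1) := fun k => hf.continuousOn.mono (hκΩ k)
  obtain ⟨R, hR⟩ :=
    (isCompact_iUnion fun k => isCompact_loopImage (hκ k)).isBounded.subset_closedBall 0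
  have hlim : Tendsto (fun w => ∑ k, loopIntegral (κ k) (dslope f w)) (cocompact ℂ) (𝓝 0) := by
    have hsum := tendsto_finsetSum Finset.univ fun k _ =>
      tendsto_loopIntegral_cauchyKernel (hκ k) (hfk k)
    rw [Finset.sum_const_zero] at hsum
    refine hsum.congr' ?_
    filter_upwards [tendsto_norm_cocompact_atTop.eventually_gt_atTop R] with w hw
    have hoff : ∀ k, w ∉ κ k '' uIcc 0 1 := fun k h => by
      linarith [mem_closedBall_zero_iff.mp (hR (mem_iUnion.mpr ⟨k, h⟩))]
    rw [sum_loopIntegral_dslope hκ hfk hoff, Finset.sum_eq_zero fun k _ =>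
      windingNumber_eq_zero_of_lt_norm (hκ k) (hloop k) ((subset_iUnion _ k).trans hR) hw]
    ring
  have hzero := (differentiable_sum_loopIntegral_dslope hΩ hf hκ hloop hκΩ
    hW).apply_eq_of_tendsto_cocompact w₀ hlim
  rw [sum_loopIntegral_dslope hκ hfk hoff] at hzero
  linear_combination hzero

end CycleFormula

section Inversion

variable {κ : ℝ → ℂ} {z : ℂ}

lemma contDiff_const_div (hκ : ContDiff ℝ 1 κ) (hκ0 : ∀ t, κ t ≠ 0) :
    ContDiff ℝ 1 fun t => z / κ t := by
  simpa only [div_eq_mul_inv] using contDiff_const.mul (hκ.fun_inv hκ0)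

lemma deriv_const_div_comp (hκ : ContDiff ℝ 1 κ) {t : ℝ} (hκ0 : κ t ≠ 0) :
    deriv (fun s => z / κ s) t = -(z * deriv κ t) / κ t ^ 2 := by
  simpa only [div_eq_mul_inv, mul_neg, neg_mul, mul_assoc] using
    ((((hκ.differentiable one_ne_zero) t).hasDerivAt.fun_inv hκ0).const_mul z).deriv

lemma loopIntegral_const_div (hκ : ContDiff ℝ 1 κ) (hκ0 : ∀ t, κ t ≠ 0) (hz : z ≠ 0)
    (F : ℂ → ℂ) :
    loopIntegral (fun t => z / κ t) (fun ζ => F ζ / ζ) =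
      -loopIntegral κ fun ζ => F (z / ζ) / ζ := by
  rw [loopIntegral, loopIntegral, ← intervalIntegral.integral_neg]
  refine integral_congr fun t _ => ?_
  rw [deriv_const_div_comp hκ (hκ0 t)]
  field_simp [hκ0 t]

lemma windingNumber_const_div_zero (hκ : ContDiff ℝ 1 κ) (hκ0 : ∀ t, κ t ≠ 0) (hz : z ≠ 0) :
    windingNumber (fun t => z / κ t) 0 = -windingNumber κ 0 := by
  simpa [windingNumber, one_div] using
    congrArg ((2 * Real.pi * Complex.I)⁻¹ * ·) (loopIntegral_const_div hκ hκ0 hz fun _ => 1)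

lemma windingNumber_const_div (hκ : ContDiff ℝ 1 κ) (hκ0 : ∀ t, κ t ≠ 0) (hz : z ≠ 0) {p : ℂ}
    (hp : p ≠ 0) (hκp : ∀ t, κ t ≠ z / p) :
    windingNumber (fun t => z / κ t) p = windingNumber κ (z / p) - windingNumber κ 0 := by
  have hcont : ∀ q, (∀ t, κ t ≠ q) → ContinuousOn (fun ζ => (ζ - q)⁻¹) (κ '' uIcc 0 1) :=
    fun q hq => ContinuousOn.fun_inv₀ (by fun_prop) fun _ ⟨t, _, ht⟩ => ht ▸ sub_ne_zero.mpr (hq t)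
  have hlhs : (loopIntegral (fun t => z / κ t) fun ζ => (ζ - p)⁻¹) =
      loopIntegral (fun t => z / κ t) fun ζ => ζ / (ζ - p) / ζ := by
    refine loopIntegral_congr ?_
    rintro _ ⟨t, _, rfl⟩
    exact (div_div_cancel_left' (div_ne_zero hz (hκ0 t))).symm
  have hrhs : (loopIntegral κ fun ζ => z / ζ / (z / ζ - p) / ζ) =
      loopIntegral κ fun ζ => (ζ - 0)⁻¹ - (ζ - z / p)⁻¹ := by
    refine loopIntegral_congr ?_
    rintro _ ⟨t, _, rfl⟩
    have h1 : z - κ t * p ≠ 0 := fun h => hκp t (by field_simp; linear_combination -h)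
    have h2 : κ t * p - z ≠ 0 := fun h => h1 (by linear_combination -h)
    simp only [sub_zero]
    field_simp [hκ0 t]
    ring
  rw [windingNumber, windingNumber, windingNumber, hlhs, loopIntegral_const_div hκ hκ0 hz,
    hrhs, loopIntegral_sub hκ (hcont 0 hκ0) (hcont _ hκp)]
  ring

/-- Cauchy's formula at `0` for the cycle `γ + z / η`, with the integrals over `z / η` pulled back
to `η`; `c` is the value of the removable singularity of `F` at `0`. -/
theorem sum_loopIntegral_sub_sum_loopIntegral_const_div {Ω : Set ℂ} (hΩ : IsOpen Ω)
    {F : ℂ → ℂ} {c : ℂ} (hF : DifferentiableOn ℂ (Function.update F 0 c) Ω) {z : ℂ} (hz : z ≠ 0)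
    {ι ι' : Type*} [Fintype ι] [Fintype ι'] {γ : ι → ℝ → ℂ} {η : ι' → ℝ → ℂ}
    (hγC : ∀ i, ContDiff ℝ 1 (γ i)) (hγloop : ∀ i, γ i 0 = γ i 1)
    (hγΩ : ∀ i t, γ i t ∈ Ω) (hγ0 : ∀ i t, γ i t ≠ 0)
    (hηC : ∀ j, ContDiff ℝ 1 (η j)) (hηloop : ∀ j, η j 0 = η j 1)
    (hηΩ : ∀ j t, z / η j t ∈ Ω) (hη0 : ∀ j t, η j t ≠ 0)
    (hW : ∀ p ∉ Ω,
      ∑ i, windingNumber (γ i) p + ∑ j, windingNumber (fun t => z / η j t) p = 0) :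
    (∑ i, loopIntegral (γ i) fun ζ => F ζ / ζ) - ∑ j, loopIntegral (η j) (fun ζ => F (z / ζ) / ζ) =
      2 * Real.pi * Complex.I *
        ((∑ i, windingNumber (γ i) 0) - ∑ j, windingNumber (η j) 0) * c := by
  set κ : ι ⊕ ι' → ℝ → ℂ := Sum.elim γ fun j t => z / η j t
  have hκC : ∀ k, ContDiff ℝ 1 (κ k) :=
    Sum.forall.mpr ⟨hγC, fun j => contDiff_const_div (hηC j) (hη0 j)⟩
  have hκloop : ∀ k, κ k 0 = κ k 1 := Sum.forall.mpr ⟨hγloop, fun j => by simp [κ, hηloop j]⟩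
  have hκΩ : ∀ k t, κ k t ∈ Ω := Sum.forall.mpr ⟨hγΩ, hηΩ⟩
  have hκ0 : ∀ k t, κ k t ≠ 0 := Sum.forall.mpr ⟨hγ0, fun j t => div_ne_zero hz (hη0 j t)⟩
  have hcauchy := sum_loopIntegral_cauchyKernel_eq hΩ hF hκC hκloop
    (fun k => image_subset_iff.mpr fun t _ => hκΩ k t)
    (fun p hp => by simpa [κ, Fintype.sum_sum_type] using hW p hp)
    (w₀ := 0) fun k ⟨t, _, ht⟩ => hκ0 k t ht
  have hupdate : ∀ k, (loopIntegral (κ k) fun ζ => Function.update F 0 c ζ * (ζ - 0)⁻¹) =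
      loopIntegral (κ k) fun ζ => F ζ / ζ := fun k => loopIntegral_congr <| by
    rintro _ ⟨t, _, rfl⟩
    simp [Function.update_of_ne (hκ0 k t), div_eq_mul_inv]
  simp only [hupdate, Fintype.sum_sum_type, κ, Sum.elim_inl, Sum.elim_inr,
    loopIntegral_const_div (hηC _) (hη0 _) hz, windingNumber_const_div_zero (hηC _) (hη0 _) hz,
    Finset.sum_neg_distrib, Function.update_self, ← sub_eq_add_neg] at hcauchy
  exact hcauchy

end Inversion

/-- The complement of `S₁` and of `z / (S₂ \ {0})`, except that the points of `z / S₂` in the disc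
`‖ζ‖ < r` are kept: there `ζ ↦ f₂ (z / ζ)` is holomorphic through the expansion of `f₂` at `∞`. -/
def hadamardDomain (S₁ S₂ : Set ℂ) (z : ℂ) (r : ℝ) : Set ℂ :=
  S₁ᶜ ∩ (ball 0 r ∪ {ζ | ζ ≠ 0 ∧ z / ζ ∉ S₂})

section HadamardDomain

variable {S₁ S₂ : Set ℂ} {z : ℂ}

lemma isOpen_hadamardDomain (hS₁ : IsClosed S₁) (hS₂ : IsClosed S₂) (z : ℂ) (r : ℝ) :
    IsOpen (hadamardDomain S₁ S₂ z r) :=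
  hS₁.isOpen_compl.inter <| isOpen_ball.union <|
    (continuousOn_const.div continuousOn_id fun _ h => h).isOpen_inter_preimage isOpen_ne
      hS₂.isOpen_compl

lemma differentiableOn_update_mul_comp_div (hS₁ : IsClosed S₁) (hS₂ : IsClosed S₂)
    {f₁ f₂ g₂ : ℂ → ℂ} {ε : ℝ} (hf₁ : DifferentiableOn ℂ f₁ S₁ᶜ) (hf₂ : DifferentiableOn ℂ f₂ S₂ᶜ)
    (hg₂ : DifferentiableOn ℂ g₂ (ball 0 ε)) (hf₂inf : ∀ w : ℂ, 1 / ε < ‖w‖ → f₂ w = g₂ w⁻¹)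
    (hz : z ≠ 0) :
    DifferentiableOn ℂ (Function.update (fun ζ => f₁ ζ * f₂ (z / ζ)) 0 (f₁ 0 * g₂ 0))
      (hadamardDomain S₁ S₂ z (ε * ‖z‖)) := by
  have hz' : 0 < ‖z‖ := norm_pos_iff.mpr hz
  rintro ζ ⟨hζ₁, hζ | ⟨hζ0, hζ₂⟩⟩ <;> refine DifferentiableAt.differentiableWithinAt ?_
  · have hε : 0 < ε :=
      pos_of_mul_pos_left ((norm_nonneg ζ).trans_lt (mem_ball_zero_iff.mp hζ)) hz'.le
    have hnear : ∀ w ∈ ball (0 : ℂ) (ε * ‖z‖),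
        Function.update (fun ζ => f₁ ζ * f₂ (z / ζ)) 0 (f₁ 0 * g₂ 0) w = f₁ w * g₂ (w / z) := by
      intro w hw
      rcases eq_or_ne w 0 with rfl | hw0
      · simp
      rw [Function.update_of_ne hw0, hf₂inf, inv_div]
      rw [mem_ball_zero_iff] at hw
      rw [norm_div, one_div_lt (by positivity) (by positivity), one_div_div, div_lt_iff₀ hz']
      exact hw
    have hζε : ζ / z ∈ ball (0 : ℂ) ε := by
      rw [mem_ball_zero_iff, norm_div, div_lt_iff₀ hz']
      exact mem_ball_zero_iff.mp hζ
    refine DifferentiableAt.congr_of_eventuallyEq ?_ (eventually_of_mem (isOpen_ball.mem_nhds hζ)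
      hnear)
    exact (hf₁.differentiableAt (hS₁.isOpen_compl.mem_nhds hζ₁)).mul
      ((hg₂.differentiableAt (isOpen_ball.mem_nhds hζε)).comp ζ (differentiableAt_id.div_const z))
  · refine DifferentiableAt.congr_of_eventuallyEq ?_ (eventually_of_mem (isOpen_ne.mem_nhds hζ0)
      fun w hw => Function.update_of_ne hw _ _)
    exact (hf₁.differentiableAt (hS₁.isOpen_compl.mem_nhds hζ₁)).mul
      ((hf₂.differentiableAt (hS₂.isOpen_compl.mem_nhds hζ₂)).comp ζ
        ((differentiableAt_const z).div differentiableAt_id hζ0))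

lemma sum_windingNumber_eq_zero_of_notMem_hadamardDomain (hS₁0 : (0 : ℂ) ∉ S₁)
    (hS₂0 : (0 : ℂ) ∈ S₂) (hz : z ≠ 0) {r : ℝ} (hr : 0 < r) {ι ι' : Type*} [Fintype ι]
    [Fintype ι'] {γ : ι → ℝ → ℂ} {η : ι' → ℝ → ℂ}
    (hγS₁ : ∀ w ∈ S₁, (∑ i, windingNumber (γ i) w) = -1)
    (hγS₂ : ∀ s ∈ S₂, s ≠ 0 → (∑ i, windingNumber (γ i) (z * s⁻¹)) = 0)
    (hηC : ∀ j, ContDiff ℝ 1 (η j))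
    (hηrange : ∀ j, ∀ t : ℝ, η j t ∉ S₂ ∧ η j t ≠ 0 ∧ ∀ s ∈ S₁, η j t ≠ z * s⁻¹)
    (hηS₂ : ∀ w ∈ S₂, (∑ j, windingNumber (η j) w) = -1)
    (hηS₁ : ∀ s ∈ S₁, (∑ j, windingNumber (η j) (z * s⁻¹)) = 0)
    {p : ℂ} (hp : p ∉ hadamardDomain S₁ S₂ z r) :
    ∑ i, windingNumber (γ i) p + ∑ j, windingNumber (fun t => z / η j t) p = 0 := by
  have hinv : ∀ {q}, q ≠ 0 → (∀ j t, η j t ≠ z / q) →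
      ∑ j, windingNumber (fun t => z / η j t) q = ∑ j, windingNumber (η j) (z / q) + 1 := by
    intro q hq hηq
    rw [Finset.sum_congr rfl fun j _ => windingNumber_const_div (hηC j)
      (fun t => (hηrange j t).2.1) hz hq (hηq j), Finset.sum_sub_distrib, hηS₂ 0 hS₂0]
    ring
  by_cases hp₁ : p ∈ S₁
  · have hηp : ∀ j t, η j t ≠ z / p := fun j t => by
      simpa only [div_eq_mul_inv] using (hηrange j t).2.2 p hp₁
    rw [hγS₁ p hp₁, hinv (ne_of_mem_of_not_mem hp₁ hS₁0) hηp, div_eq_mul_inv, hηS₁ p hp₁]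
    ring
  obtain ⟨hpr, hp₂⟩ : r ≤ ‖p‖ ∧ (p ≠ 0 → z / p ∈ S₂) := by
    simpa [hadamardDomain, hp₁] using hp
  have hp0 : p ≠ 0 := by
    rintro rfl
    simp only [norm_zero] at hpr
    linarith
  have hs := hp₂ hp0
  have hγp := hγS₂ _ hs (div_ne_zero hz hp0)
  rw [← div_eq_mul_inv, div_div_cancel₀ hz] at hγp
  rw [hγp, hinv hp0 fun j t h => (hηrange j t).1 (h ▸ hs), hηS₂ _ hs]
  ring

end HadamardDomain

theorem stmt_19_general (S₁ S₂ : Set ℂ)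
    (hS₁c : IsCompact S₁) (hS₂c : IsCompact S₂)
    (hS₁0 : (0 : ℂ) ∉ S₁) (hS₂0 : (0 : ℂ) ∈ S₂)
    (f₁ f₂ g₂ : ℂ → ℂ) (ε₂ : ℝ) (hε₂ : 0 < ε₂)
    (hf₁ : DifferentiableOn ℂ f₁ S₁ᶜ)
    (hf₂ : DifferentiableOn ℂ f₂ S₂ᶜ)
    (hg₂ : DifferentiableOn ℂ g₂ (Metric.ball (0 : ℂ) ε₂))
    (hf₂inf : ∀ w : ℂ, 1 / ε₂ < ‖w‖ → f₂ w = g₂ w⁻¹)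
    (z : ℂ) (hz : z ≠ 0)
    -- the generalized Hadamard cycle `γ` for `S₁` in `ℙ¹ \ (z·S₂⁻¹ ∪ {0})`
    (m : ℕ) (γ : Fin m → ℝ → ℂ)
    (hγC : ∀ i, ContDiff ℝ 1 (γ i)) (hγloop : ∀ i, γ i 0 = γ i 1)
    (hγrange : ∀ i, ∀ t : ℝ,
      γ i t ∉ S₁ ∧ γ i t ≠ 0 ∧ ∀ s ∈ S₂, s ≠ 0 → γ i t ≠ z * s⁻¹)
    (hγS₁ : ∀ w ∈ S₁, (∑ i, windingNumber (γ i) w) = -1)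
    (hγS₂ : ∀ s ∈ S₂, s ≠ 0 → (∑ i, windingNumber (γ i) (z * s⁻¹)) = 0)
    (hγ0 : (∑ i, windingNumber (γ i) 0) = 0)
    -- the generalized Hadamard cycle `η` for `S₂` in `ℙ¹ \ (z·S₁⁻¹ ∪ {∞})`
    (m' : ℕ) (η : Fin m' → ℝ → ℂ)
    (hηC : ∀ j, ContDiff ℝ 1 (η j)) (hηloop : ∀ j, η j 0 = η j 1)
    (hηrange : ∀ j, ∀ t : ℝ,
      η j t ∉ S₂ ∧ η j t ≠ 0 ∧ ∀ s ∈ S₁, η j t ≠ z * s⁻¹)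
    (hηS₂ : ∀ w ∈ S₂, (∑ j, windingNumber (η j) w) = -1)
    (hηS₁ : ∀ s ∈ S₁, (∑ j, windingNumber (η j) (z * s⁻¹)) = 0) :
    (2 * Real.pi * Complex.I)⁻¹ *
        (∑ i, loopIntegral (γ i) fun ζ => f₁ ζ * f₂ (z / ζ) / ζ) -
      (2 * Real.pi * Complex.I)⁻¹ *
        (∑ j, loopIntegral (η j) fun ζ => f₂ ζ * f₁ (z / ζ) / ζ) =
      f₁ 0 * g₂ 0 := by
  have hγΩ : ∀ i t, γ i t ∈ hadamardDomain S₁ S₂ z (ε₂ * ‖z‖) := fun i t =>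
    ⟨(hγrange i t).1, Or.inr ⟨(hγrange i t).2.1, fun hs => (hγrange i t).2.2 _ hs
      (div_ne_zero hz (hγrange i t).2.1) (by rw [← div_eq_mul_inv, div_div_cancel₀ hz])⟩⟩
  have hηΩ : ∀ j t, z / η j t ∈ hadamardDomain S₁ S₂ z (ε₂ * ‖z‖) := fun j t =>
    ⟨fun hs => (hηrange j t).2.2 _ hs (by rw [← div_eq_mul_inv, div_div_cancel₀ hz]),
      Or.inr ⟨div_ne_zero hz (hηrange j t).2.1, by rw [div_div_cancel₀ hz]; exact (hηrange j t).1⟩⟩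
  have key := sum_loopIntegral_sub_sum_loopIntegral_const_div
    (isOpen_hadamardDomain hS₁c.isClosed hS₂c.isClosed z _)
    (differentiableOn_update_mul_comp_div hS₁c.isClosed hS₂c.isClosed hf₁ hf₂ hg₂ hf₂inf hz) hz
    hγC hγloop hγΩ (fun i t => (hγrange i t).2.1) hηC hηloop hηΩ (fun j t => (hηrange j t).2.1)
    fun p => sum_windingNumber_eq_zero_of_notMem_hadamardDomain hS₁0 hS₂0 hz
      (mul_pos hε₂ (norm_pos_iff.mpr hz)) hγS₁ hγS₂ hηC hηrange hηS₂ hηS₁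
  simp only [div_div_cancel₀ hz, mul_comm (f₁ (z / _)), hγ0, hηS₂ 0 hS₂0, sub_neg_eq_add,
    zero_add, mul_one] at key
  rw [← mul_sub, key, inv_mul_cancel_left₀ Complex.two_pi_I_ne_zero]

/-- Non-commutativity defect of the generalized Hadamard product. Let `S₁, S₂` be
star-eligible closed subsets of `ℙ¹` with `0, ∞ ∉ S₁` and `0 ∈ S₂`, `∞ ∉ S₂` (so `S₁`, `S₂`
are compact subsets of `ℂ`, `0 ∉ S₁`, `0 ∈ S₂`). Let `f₁ ∈ Hol(ℙ¹ \ S₁)` and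
`f₂ ∈ Hol(ℙ¹ \ S₂)`, holomorphy at `∞` being expressed via `fᵢ w = gᵢ (1/w)` for `|w|` large
with `gᵢ` holomorphic near `0`, and `f₂(∞) = g₂ 0`. For `z ∈ ℂ* \ S₁·S₂`, let `γ` (a finite
family of `C¹` loops) be a generalized Hadamard cycle for `S₁` in
`ℙ¹ \ (z·S₂⁻¹ ∪ {0})` (winding number `0` on `z·S₂⁻¹ ∪ {0}` and `−1` on `S₁`), and let `η`
be a generalized Hadamard cycle for `S₂` in `ℙ¹ \ (z·S₁⁻¹ ∪ {∞})` (winding number `0` on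
`z·S₁⁻¹` and `−1` on `S₂`). Then
`(f₁ ⋆ f₂)(z) − (f₂ ⋆ f₁)(z) = f₁(0)·f₂(∞)`. -/
theorem stmt_19 (S₁ S₂ : Set ℂ)
    (hS₁c : IsCompact S₁) (hS₂c : IsCompact S₂)
    (hS₁0 : (0 : ℂ) ∉ S₁) (hS₂0 : (0 : ℂ) ∈ S₂)
    (f₁ f₂ g₁ g₂ : ℂ → ℂ) (ε₁ ε₂ : ℝ) (hε₁ : 0 < ε₁) (hε₂ : 0 < ε₂)
    (hf₁ : DifferentiableOn ℂ f₁ S₁ᶜ)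
    (hf₂ : DifferentiableOn ℂ f₂ S₂ᶜ)
    (hg₁ : DifferentiableOn ℂ g₁ (Metric.ball (0 : ℂ) ε₁))
    (hg₂ : DifferentiableOn ℂ g₂ (Metric.ball (0 : ℂ) ε₂))
    (hf₁inf : ∀ w : ℂ, 1 / ε₁ < ‖w‖ → f₁ w = g₁ w⁻¹)
    (hf₂inf : ∀ w : ℂ, 1 / ε₂ < ‖w‖ → f₂ w = g₂ w⁻¹)
    (z : ℂ) (hz : z ≠ 0) (hzS : z ∉ S₁ * S₂)
    -- the generalized Hadamard cycle `γ` for `S₁` in `ℙ¹ \ (z·S₂⁻¹ ∪ {0})`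
    (m : ℕ) (γ : Fin m → ℝ → ℂ)
    (hγC : ∀ i, ContDiff ℝ 1 (γ i)) (hγloop : ∀ i, γ i 0 = γ i 1)
    (hγrange : ∀ i, ∀ t : ℝ,
      γ i t ∉ S₁ ∧ γ i t ≠ 0 ∧ ∀ s ∈ S₂, s ≠ 0 → γ i t ≠ z * s⁻¹)
    (hγS₁ : ∀ w ∈ S₁, (∑ i, windingNumber (γ i) w) = -1)
    (hγS₂ : ∀ s ∈ S₂, s ≠ 0 → (∑ i, windingNumber (γ i) (z * s⁻¹)) = 0)
    (hγ0 : (∑ i, windingNumber (γ i) 0) = 0)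
    -- the generalized Hadamard cycle `η` for `S₂` in `ℙ¹ \ (z·S₁⁻¹ ∪ {∞})`
    (m' : ℕ) (η : Fin m' → ℝ → ℂ)
    (hηC : ∀ j, ContDiff ℝ 1 (η j)) (hηloop : ∀ j, η j 0 = η j 1)
    (hηrange : ∀ j, ∀ t : ℝ,
      η j t ∉ S₂ ∧ η j t ≠ 0 ∧ ∀ s ∈ S₁, η j t ≠ z * s⁻¹)
    (hηS₂ : ∀ w ∈ S₂, (∑ j, windingNumber (η j) w) = -1)
    (hηS₁ : ∀ s ∈ S₁, (∑ j, windingNumber (η j) (z * s⁻¹)) = 0) :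
    (2 * Real.pi * Complex.I)⁻¹ *
        (∑ i, loopIntegral (γ i) fun ζ => f₁ ζ * f₂ (z / ζ) / ζ) -
      (2 * Real.pi * Complex.I)⁻¹ *
        (∑ j, loopIntegral (η j) fun ζ => f₂ ζ * f₁ (z / ζ) / ζ) =
      f₁ 0 * g₂ 0 :=
  stmt_19_general S₁ S₂ hS₁c hS₂c hS₁0 hS₂0 f₁ f₂ g₂ ε₂ hε₂ hf₁ hf₂ hg₂ hf₂inf z hz m γ hγC hγloop
    hγrange hγS₁ hγS₂ hγ0 m' η hηC hηloop hηrange hηS₂ hηS₁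
end
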